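/- arXiv:2203.09221 — 9 statements merged into one kernel-verified Lean document; each statement's English description precedes it below -/
import Mathlib

section
/- Let G be a group and N a normal subgroup of G. Let [G,N] denote the subgroup of G generated by all mixed commutators [g,w] with g in G and w in N. Suppose y_1,...,y_k, z_1,...,z_k are elements of G such that [y_i, z_i] ∈ N for each i and [y_1,z_1]⋯[y_k,z_k] ∈ [G,N]. Then for every positive integer n, [y_1^n, z_1]⋯[y_k^n, z_k] ∈ [G,N]. -/
open scoped commutatorElement

private lemma aux_conj_pow {Q : Type*} [Group Q] (a b : Q)
    (h : ∀ q : Q, Commute ⁅a, b⁆ q) (n : ℕ) :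
    a ^ n * b * (a ^ n)⁻¹ = ⁅a, b⁆ ^ n * b := by
  induction n with
  | zero => simp
  | succ m ih =>
    have h1 : a ^ (m + 1) * b * (a ^ (m + 1))⁻¹ = a * (a ^ m * b * (a ^ m)⁻¹) * a⁻¹ := by
      group
    have hc : a * ⁅a, b⁆ ^ m = ⁅a, b⁆ ^ m * a := ((h a).pow_left m).symm.eq
    rw [h1, ih, ← mul_assoc, hc, pow_succ, mul_assoc, mul_assoc, mul_assoc]
    congr 1
    rw [← mul_assoc, commutatorElement_def]
    group

private lemma aux_comm_pow {Q : Type*} [Group Q] (a b : Q)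
    (h : ∀ q : Q, Commute ⁅a, b⁆ q) (n : ℕ) :
    ⁅a ^ n, b⁆ = ⁅a, b⁆ ^ n := by
  rw [commutatorElement_def, ← mul_inv_cancel_right (⁅a, b⁆ ^ n) b]
  rw [← aux_conj_pow a b h n]

private lemma aux_list_pow {Q : Type*} [Group Q] (n : ℕ) :
    ∀ l : List Q, (∀ x ∈ l, ∀ q : Q, Commute x q) →
      (l.map (· ^ n)).prod = l.prod ^ n := by
  intro l
  induction l with
  | nil => simp
  | cons a t ih =>
    intro h
    have ha : ∀ q : Q, Commute a q := h a List.mem_cons_self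
    have ht := ih fun x hx => h x (List.mem_cons_of_mem a hx)
    simp only [List.map_cons, List.prod_cons, ht, (ha t.prod).mul_pow]

/-- Let `N ⊴ G`, and `y₁,…,y_k, z₁,…,z_k ∈ G` with `[yᵢ, zᵢ] ∈ N` for each `i` and
`[y₁,z₁]⋯[y_k,z_k] ∈ [G,N]`.  Then `[y₁ⁿ,z₁]⋯[y_kⁿ,z_k] ∈ [G,N]` for every `n ≥ 1`. -/
theorem prod_commutator_pow_left_mem_mixedCommutator {G : Type*} [Group G]
    (N : Subgroup G) (hN : N.Normal) (k : ℕ) (y z : Fin k → G)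
    (h1 : ∀ i, ⁅y i, z i⁆ ∈ N)
    (h2 : (List.ofFn fun i => ⁅y i, z i⁆).prod ∈ ⁅(⊤ : Subgroup G), N⁆)
    (n : ℕ) (hn : 0 < n) :
    (List.ofFn fun i => ⁅(y i) ^ n, z i⁆).prod ∈ ⁅(⊤ : Subgroup G), N⁆ := by
  haveI := hN
  set K : Subgroup G := ⁅(⊤ : Subgroup G), N⁆ with hK
  haveI : K.Normal := Subgroup.commutator_normal ⊤ N
  set f : G →* G ⧸ K := QuotientGroup.mk' K with hf
  -- every element of N is central in the quotient
  have hcent : ∀ w ∈ N, ∀ q : G ⧸ K, Commute (f w) q := by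
    intro w hw q
    induction q using QuotientGroup.induction_on with
    | H x =>
      have hx : ⁅x, w⁆ ∈ K := Subgroup.commutator_mem_commutator (Subgroup.mem_top x) hw
      have : f ⁅x, w⁆ = 1 := (QuotientGroup.eq_one_iff _).mpr hx
      rw [map_commutatorElement] at this
      exact ((commutatorElement_eq_one_iff_commute.mp this)).symm
  rw [← QuotientGroup.eq_one_iff]
  have hmk : ((((List.ofFn fun i => ⁅(y i) ^ n, z i⁆).prod : G)) : G ⧸ K)
      = f (List.ofFn fun i => ⁅(y i) ^ n, z i⁆).prod := rfl
  rw [hmk, map_list_prod]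
  have hmap : (List.map f (List.ofFn fun i => ⁅(y i) ^ n, z i⁆))
      = List.map (· ^ n) (List.ofFn fun i => f ⁅y i, z i⁆) := by
    rw [List.map_ofFn, List.map_ofFn]
    congr 1
    funext i
    simp only [Function.comp_apply, map_commutatorElement, map_pow]
    exact aux_comm_pow (f (y i)) (f (z i))
      (by rw [← map_commutatorElement]; exact hcent _ (h1 i)) n
  rw [hmap, aux_list_pow n _ (by
    intro x hx
    rw [List.mem_ofFn] at hx
    obtain ⟨i, rfl⟩ := hx
    exact hcent _ (h1 i))]
  have : (List.ofFn fun i => f ⁅y i, z i⁆) = List.map f (List.ofFn fun i => ⁅y i, z i⁆) := by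
    rw [List.map_ofFn]; rfl
  rw [this, ← map_list_prod]
  have h2' : f (List.ofFn fun i => ⁅y i, z i⁆).prod = 1 := (QuotientGroup.eq_one_iff _).mpr h2
  rw [h2', one_pow]
end

section
/- Let G be a group and N a normal subgroup of G. Suppose y_1,...,y_k, z_1,...,z_k ∈ G satisfy [y_i, z_i] ∈ N for each i and [y_1,z_1]⋯[y_k,z_k] ∈ [G,N]. Then for every positive integer n, [y_1, z_1^n]⋯[y_k, z_k^n] ∈ [G,N]. -/
open scoped commutatorElement

private lemma commutator_mul_right' {G : Type*} [Group G] (a b c : G) :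
    ⁅a, b * c⁆ = ⁅a, b⁆ * (b * ⁅a, c⁆ * b⁻¹) := by
  simp only [commutatorElement_def]; group

private lemma commutator_pow_mem {G : Type*} [Group G] (N : Subgroup G) (hN : N.Normal)
    (a b : G) (h : ⁅a, b⁆ ∈ N) : ∀ m : ℕ, ⁅a, b ^ m⁆ ∈ N := by
  intro m
  induction m with
  | zero => simpa using N.one_mem
  | succ m ih =>
    rw [pow_succ', commutator_mul_right']
    exact N.mul_mem h (hN.conj_mem _ ih b)

/-- Let `N ⊴ G`, and `y₁,…,y_k, z₁,…,z_k ∈ G` with `[yᵢ, zᵢ] ∈ N` for each `i` and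
`[y₁,z₁]⋯[y_k,z_k] ∈ [G,N]`.  Then `[y₁,z₁ⁿ]⋯[y_k,z_kⁿ] ∈ [G,N]` for every `n ≥ 1`. -/
theorem prod_commutator_pow_right_mem_mixedCommutator {G : Type*} [Group G]
    (N : Subgroup G) (hN : N.Normal) (k : ℕ) (y z : Fin k → G)
    (h1 : ∀ i, ⁅y i, z i⁆ ∈ N)
    (h2 : (List.ofFn fun i => ⁅y i, z i⁆).prod ∈ ⁅(⊤ : Subgroup G), N⁆)
    (n : ℕ) (hn : 0 < n) :
    (List.ofFn fun i => ⁅y i, (z i) ^ n⁆).prod ∈ ⁅(⊤ : Subgroup G), N⁆ := by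
  set K : Subgroup G := ⁅(⊤ : Subgroup G), N⁆ with hK
  haveI : K.Normal := Subgroup.commutator_normal ⊤ N
  set f := QuotientGroup.mk' K with hf
  -- images of elements of N are central in the quotient
  have hcent : ∀ w : G, w ∈ N → f w ∈ Subgroup.center (G ⧸ K) := by
    intro w hw
    rw [Subgroup.mem_center_iff]
    intro g
    obtain ⟨a, rfl⟩ := QuotientGroup.mk'_surjective K g
    have : ⁅a, w⁆ ∈ K := Subgroup.commutator_mem_commutator (Subgroup.mem_top a) hw
    have h1 : f ⁅a, w⁆ = 1 := (QuotientGroup.eq_one_iff _).mpr this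
    rw [map_commutatorElement, commutatorElement_eq_one_iff_mul_comm] at h1
    exact show f a * f w = f w * f a from h1
  -- key: f ⁅y, zᵐ⁆ = (f ⁅y, z⁆)^m when ⁅y,z⁆ ∈ N
  have key : ∀ (a b : G), ⁅a, b⁆ ∈ N → ∀ m : ℕ, f ⁅a, b ^ m⁆ = (f ⁅a, b⁆) ^ m := by
    intro a b hab m
    induction m with
    | zero => simp
    | succ m ih =>
      rw [pow_succ', commutator_mul_right', map_mul, map_mul, map_mul, ih, pow_succ']
      congr 1
      have hc : (f ⁅a, b⁆) ^ m ∈ Subgroup.center (G ⧸ K) :=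
        (Subgroup.center _).pow_mem (hcent _ hab) m
      have hcm := Subgroup.mem_center_iff.mp hc (f b)
      rw [map_inv, hcm, mul_assoc, mul_inv_cancel, mul_one]
  -- push everything to the quotient
  suffices hgoal : f ((List.ofFn fun i => ⁅y i, (z i) ^ n⁆).prod) = 1 by
    exact (QuotientGroup.eq_one_iff _).mp hgoal
  have hmap : f ((List.ofFn fun i => ⁅y i, (z i) ^ n⁆).prod)
      = (List.ofFn fun i => (f ⁅y i, z i⁆) ^ n).prod := by
    rw [map_list_prod]
    congr 1
    rw [List.map_ofFn]
    exact congrArg List.ofFn (funext fun i => key (y i) (z i) (h1 i) n)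
  rw [hmap]
  -- work inside the center, a commutative group
  set W : Fin k → Subgroup.center (G ⧸ K) := fun i => ⟨f ⁅y i, z i⁆, hcent _ (h1 i)⟩ with hW
  have hWprod : ((List.ofFn fun i => (W i) ^ n).prod : G ⧸ K)
      = (List.ofFn fun i => (f ⁅y i, z i⁆) ^ n).prod := by
    rw [SubmonoidClass.coe_list_prod, List.map_ofFn]
    rfl
  rw [← hWprod]
  have hone : (List.ofFn W).prod = 1 := by
    have : f ((List.ofFn fun i => ⁅y i, z i⁆).prod) = 1 :=
      (QuotientGroup.eq_one_iff _).mpr h2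
    rw [map_list_prod, List.map_ofFn] at this
    have := Subtype.ext (p := fun x => x ∈ Subgroup.center (G ⧸ K))
      (a1 := (List.ofFn W).prod) (a2 := 1) (by
        rw [SubmonoidClass.coe_list_prod]
        simpa [hW, Function.comp_def] using this)
    simpa using this
  have : (List.ofFn fun i => (W i) ^ n).prod = ((List.ofFn W).prod) ^ n := by
    open scoped IsMulCommutative in
    rw [List.prod_ofFn, List.prod_ofFn, Finset.prod_pow]
  rw [this, hone, one_pow, OneMemClass.coe_one]
end

section
/- In the free group F_2 = ⟨a, b⟩, for every integer ℓ ≥ 2, the following identity holds: [g_1, w_1]⋯[g_{ℓ−1}, w_{ℓ−1}] = b a^2 b^{-1} a^{-2} [a,b]^ℓ a^{2−ℓ} b a^{ℓ−2} b^{-1}, where g_1 = b a b^{-1}, w_1 = [b,a], and for i > 1, g_i = (b a^{2−i} b^{-1}) a^{i−1} (b a^{2−i} b^{-1})^{-1} and w_i = (b a^{2−i} b^{-1}) [b, a^{-1}] (b a^{2−i} b^{-1})^{-1}. -/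
open commutatorElement
/-- The generator `a` of the free group `F₂ = ⟨a,b⟩`. -/
def fa : FreeGroup Bool := FreeGroup.of true

/-- The generator `b` of the free group `F₂ = ⟨a,b⟩`. -/
def fb : FreeGroup Bool := FreeGroup.of false

/-- The words `g_i`: `g₁ = b a b⁻¹`, and for `i > 1`,
`g_i = (b a^{2−i} b⁻¹) a^{i−1} (b a^{2−i} b⁻¹)⁻¹`. -/
def gWord (i : ℕ) : FreeGroup Bool :=
  if i = 1 then fb * fa * fb⁻¹
  else (fb * fa ^ ((2 : ℤ) - (i : ℤ)) * fb⁻¹) * fa ^ ((i : ℤ) - 1) *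
    (fb * fa ^ ((2 : ℤ) - (i : ℤ)) * fb⁻¹)⁻¹

/-- The words `w_i`: `w₁ = [b,a]`, and for `i > 1`,
`w_i = (b a^{2−i} b⁻¹) [b, a⁻¹] (b a^{2−i} b⁻¹)⁻¹`. -/
def wWord (i : ℕ) : FreeGroup Bool :=
  if i = 1 then ⁅fb, fa⁆
  else (fb * fa ^ ((2 : ℤ) - (i : ℤ)) * fb⁻¹) * ⁅fb, fa⁻¹⁆ *
    (fb * fa ^ ((2 : ℤ) - (i : ℤ)) * fb⁻¹)⁻¹

/-- In the free group `F₂ = ⟨a,b⟩`, for every `ℓ ≥ 2`: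
`[g₁,w₁]⋯[g_{ℓ−1},w_{ℓ−1}] = b a² b⁻¹ a⁻² [a,b]^ℓ a^{2−ℓ} b a^{ℓ−2} b⁻¹`. -/
theorem freeGroup_commutator_word_identity (ℓ : ℕ) (hℓ : 2 ≤ ℓ) :
    ((List.range (ℓ - 1)).map fun j => ⁅gWord (j + 1), wWord (j + 1)⁆).prod =
      fb * fa ^ 2 * fb⁻¹ * (fa ^ 2)⁻¹ * ⁅fa, fb⁆ ^ ℓ *
        fa ^ ((2 : ℤ) - (ℓ : ℤ)) * fb * fa ^ ((ℓ : ℤ) - 2) * fb⁻¹ := by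
  induction ℓ, hℓ using Nat.le_induction with
  | base =>
    simp only [show (2:ℕ)-1 = 1 from rfl, List.range_succ, List.range_zero,
      List.nil_append, List.map_cons, List.map_nil, List.prod_cons, List.prod_nil, mul_one,
      Nat.zero_add, gWord, wWord, if_pos rfl, if_true, pow_two]
    group
  | succ n hn ih =>
    have h1 : n + 1 - 1 = (n - 1) + 1 := by omega
    rw [h1, List.range_succ, List.map_append, List.prod_append, ih]
    have h2 : n - 1 + 1 = n := by omega
    simp only [List.map_cons, List.map_nil, List.prod_cons, List.prod_nil, mul_one, h2]
    have hne : n ≠ 1 := by omega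
    rw [gWord, wWord, if_neg hne, if_neg hne]
    push_cast
    rw [pow_succ ⁅fa, fb⁆ n]
    generalize ⁅fa, fb⁆ ^ n = c
    group
end

section
/- In the one-relator group R_ℓ = ⟨a, b | [a,b]^ℓ⟩ with ℓ ≥ 2, setting y = (b a^2) b^{-1} (b a^2)^{-1} and z = (b a^2) a^{-ℓ} (b a^2)^{-1}, the commutator [y, z] is a product of ℓ − 1 mixed commutators [g_i, w_i] with g_i ∈ R_ℓ and w_i ∈ R_ℓ' (the commutator subgroup); in particular [y^n, z] ∈ [R_ℓ, R_ℓ'] for every positive integer n. -/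
open scoped commutatorElement

/-- The one-relator group `R_ℓ = ⟨a, b ∣ [a,b]^ℓ⟩`. -/
def OneRelatorGroup (ℓ : ℕ) : Type :=
  PresentedGroup ({⁅FreeGroup.of true, FreeGroup.of false⁆ ^ ℓ} : Set (FreeGroup Bool))

noncomputable instance (ℓ : ℕ) : Group (OneRelatorGroup ℓ) := by
  unfold OneRelatorGroup; infer_instance

/-- The image of `a` in `R_ℓ`. -/
def Ra (ℓ : ℕ) : OneRelatorGroup ℓ := PresentedGroup.of true

/-- The image of `b` in `R_ℓ`. -/
def Rb (ℓ : ℕ) : OneRelatorGroup ℓ := PresentedGroup.of false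

section Aux

variable {G : Type*} [Group G]

/-- Key expansion: `⁅b⁻¹, (a⁻¹)^n⁆` as a telescoping product of commutators with
`s = ⁅b⁻¹, a⁻¹⁆`, times `s^n`. -/
theorem oneRelator_aux_expand (a b : G) (n : ℕ) :
    ⁅b⁻¹, (a⁻¹)^n⁆ =
      ((List.range n).map (fun k => ⁅⁅b⁻¹,a⁻¹⁆^k * (a⁻¹)^k * (⁅b⁻¹,a⁻¹⁆⁻¹)^k, ⁅b⁻¹,a⁻¹⁆⁆)).prod
        * ⁅b⁻¹,a⁻¹⁆^n := by
  induction n with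
  | zero => simp
  | succ n ih =>
    rw [List.range_succ, List.map_append, List.prod_append]
    have step : ⁅b⁻¹, (a⁻¹)^(n+1)⁆ = ⁅b⁻¹, (a⁻¹)^n⁆ * ((a⁻¹)^n * ⁅b⁻¹,a⁻¹⁆ * ((a⁻¹)^n)⁻¹) := by
      group
    set s := ⁅b⁻¹,a⁻¹⁆ with hs
    have key : s^n * ((a⁻¹)^n * s * ((a⁻¹)^n)⁻¹) = ⁅s^n * (a⁻¹)^n * (s⁻¹)^n, s⁆ * s^(n+1) := by
      simp only [commutatorElement_def, inv_pow]
      group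
    rw [step, ih]
    simp only [List.map_cons, List.map_nil, List.prod_cons, List.prod_nil, mul_one]
    rw [mul_assoc _ (s^n), key, ← mul_assoc]

theorem oneRelator_aux_s_pow (a b : G) (ℓ : ℕ) (h : ⁅a,b⁆ ^ ℓ = 1) : ⁅b⁻¹,a⁻¹⁆ ^ ℓ = 1 := by
  have hs : ⁅b⁻¹,a⁻¹⁆ = (b*a)⁻¹ * ⁅a,b⁆⁻¹ * ((b*a)⁻¹)⁻¹ := by group
  rw [hs, conj_pow, inv_pow, h]; group

theorem oneRelator_aux_ofFn_map {β : Type*} (n : ℕ) (h : ℕ → β) :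
    List.ofFn (fun i : Fin n => h i.val) = (List.range n).map h := by
  apply List.ext_getElem <;> simp

theorem oneRelator_aux_drop {β : Type*} [Monoid β] (n : ℕ) (hn : n ≠ 0) (F : ℕ → β)
    (hF0 : F 0 = 1) :
    ((List.range n).map F).prod = ((List.range (n-1)).map (F ∘ Nat.succ)).prod := by
  obtain ⟨m, rfl⟩ : ∃ m, n = m + 1 := ⟨n - 1, by omega⟩
  rw [List.range_succ_eq_map, List.map_cons, List.prod_cons, hF0, one_mul, List.map_map,
    Nat.add_sub_cancel]

end Aux

/-- In `R_ℓ = ⟨a,b ∣ [a,b]^ℓ⟩` with `ℓ ≥ 2`, setting `y = (ba²) b⁻¹ (ba²)⁻¹` and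
`z = (ba²) a^{−ℓ} (ba²)⁻¹`, the commutator `[y,z]` is a product of `ℓ − 1` mixed
commutators `[gᵢ, wᵢ]` with `gᵢ ∈ R_ℓ`, `wᵢ ∈ R_ℓ'`; in particular
`[yⁿ, z] ∈ [R_ℓ, R_ℓ']` for every positive integer `n`. -/
theorem oneRelator_mixed_commutator (ℓ : ℕ) (hℓ : 2 ≤ ℓ) :
    ∀ y z : OneRelatorGroup ℓ,
      y = (Rb ℓ * Ra ℓ ^ 2) * (Rb ℓ)⁻¹ * (Rb ℓ * Ra ℓ ^ 2)⁻¹ →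
      z = (Rb ℓ * Ra ℓ ^ 2) * (Ra ℓ) ^ (-(ℓ : ℤ)) * (Rb ℓ * Ra ℓ ^ 2)⁻¹ →
      (∃ g w : Fin (ℓ - 1) → OneRelatorGroup ℓ,
          (∀ i, w i ∈ commutator (OneRelatorGroup ℓ)) ∧
          ⁅y, z⁆ = (List.ofFn fun i => ⁅g i, w i⁆).prod) ∧
      ∀ n : ℕ, 0 < n →
        ⁅y ^ n, z⁆ ∈ ⁅(⊤ : Subgroup (OneRelatorGroup ℓ)), commutator (OneRelatorGroup ℓ)⁆ := by
  intro y z hy hz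
  set a := Ra ℓ with ha
  set b := Rb ℓ with hb
  -- the relation
  have hrel : ⁅a, b⁆ ^ ℓ = 1 := by
    have h1 : (⁅FreeGroup.of true, FreeGroup.of false⁆ ^ ℓ : FreeGroup Bool) ∈
        Subgroup.normalClosure ({⁅FreeGroup.of true, FreeGroup.of false⁆ ^ ℓ} :
          Set (FreeGroup Bool)) :=
      Subgroup.subset_normalClosure rfl
    have h2 : PresentedGroup.mk _ (⁅FreeGroup.of true, FreeGroup.of false⁆ ^ ℓ)
        = (1 : OneRelatorGroup ℓ) := (QuotientGroup.eq_one_iff _).mpr h1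
    rw [map_pow, map_commutatorElement] at h2
    exact h2
  set s : OneRelatorGroup ℓ := ⁅b⁻¹, a⁻¹⁆ with hs
  have hspow : s ^ ℓ = 1 := oneRelator_aux_s_pow a b ℓ hrel
  have hsmem : s ∈ commutator (OneRelatorGroup ℓ) :=
    Subgroup.commutator_mem_commutator (Subgroup.mem_top _) (Subgroup.mem_top _)
  set c : OneRelatorGroup ℓ := b * a ^ 2 with hc
  set φ : OneRelatorGroup ℓ →* OneRelatorGroup ℓ := (MulAut.conj c).toMonoidHom with hφ
  have hyφ : y = φ b⁻¹ := by rw [hy]; simp [hφ, MulAut.conj_apply, mul_assoc]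
  have hzφ : z = φ ((a⁻¹) ^ ℓ) := by
    rw [hz]
    have h : a ^ (-(ℓ : ℤ)) = (a⁻¹) ^ ℓ := by
      rw [zpow_neg, zpow_natCast, inv_pow]
    rw [h]; simp [hφ, MulAut.conj_apply, mul_assoc]
  have hwmem : φ s ∈ commutator (OneRelatorGroup ℓ) := by
    simpa [hφ, MulAut.conj_apply] using (Subgroup.Normal.conj_mem inferInstance s hsmem c)
  -- the decomposition
  set F : ℕ → OneRelatorGroup ℓ := fun k => ⁅s^k * (a⁻¹)^k * (s⁻¹)^k, s⁆ with hF
  have hexp : ⁅b⁻¹, (a⁻¹)^ℓ⁆ = ((List.range ℓ).map F).prod := by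
    rw [oneRelator_aux_expand a b ℓ, ← hs, hspow, mul_one]
  have hF0 : F 0 = 1 := by simp [hF]
  have hdrop : ((List.range ℓ).map F).prod = ((List.range (ℓ-1)).map (F ∘ Nat.succ)).prod :=
    oneRelator_aux_drop ℓ (by omega) F hF0
  have hmain : ∃ g w : Fin (ℓ - 1) → OneRelatorGroup ℓ,
      (∀ i, w i ∈ commutator (OneRelatorGroup ℓ)) ∧
      ⁅y, z⁆ = (List.ofFn fun i => ⁅g i, w i⁆).prod := by
    refine ⟨fun i => φ (s^(i.val+1) * (a⁻¹)^(i.val+1) * (s⁻¹)^(i.val+1)), fun _ => φ s,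
      fun _ => hwmem, ?_⟩
    rw [hyφ, hzφ, ← map_commutatorElement, hexp, hdrop]
    have h : (List.ofFn fun i : Fin (ℓ-1) =>
          ⁅φ (s^(i.val+1) * (a⁻¹)^(i.val+1) * (s⁻¹)^(i.val+1)), φ s⁆)
        = (List.range (ℓ-1)).map (fun k => φ (F (k+1))) := by
      rw [← oneRelator_aux_ofFn_map (ℓ-1) (fun k => φ (F (k+1)))]
      congr 1
      funext i
      simp only [hF]
      exact (map_commutatorElement φ _ _).symm
    rw [h]
    simp only [map_list_prod, List.map_map]
    rfl
  refine ⟨hmain, ?_⟩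
  -- second part
  obtain ⟨g, w, hw, hprod⟩ := hmain
  intro n hn
  set N : Subgroup (OneRelatorGroup ℓ) :=
    ⁅(⊤ : Subgroup (OneRelatorGroup ℓ)), commutator (OneRelatorGroup ℓ)⁆ with hN
  have hNnormal : N.Normal := Subgroup.commutator_normal ⊤ (commutator (OneRelatorGroup ℓ))
  have hyz : ⁅y, z⁆ ∈ N := by
    rw [hprod]
    apply Subgroup.list_prod_mem
    intro x hx
    rw [List.mem_ofFn] at hx
    obtain ⟨i, rfl⟩ := hx
    exact Subgroup.commutator_mem_commutator (Subgroup.mem_top _) (hw i)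
  have hcomm : Commute ((QuotientGroup.mk' N) y) ((QuotientGroup.mk' N) z) := by
    rw [← commutatorElement_eq_one_iff_commute, ← map_commutatorElement]
    exact (QuotientGroup.eq_one_iff _).mpr hyz
  have hpow : Commute ((QuotientGroup.mk' N) (y^n)) ((QuotientGroup.mk' N) z) := by
    rw [map_pow]
    exact hcomm.pow_left n
  have hone : (QuotientGroup.mk' N) ⁅y^n, z⁆ = 1 := by
    rw [map_commutatorElement, commutatorElement_eq_one_iff_commute]
    exact hpow
  exact (QuotientGroup.eq_one_iff _).mp hone
end

section
/- Let G be a group, N a normal subgroup, and μ : N → ℝ a G-invariant homogeneous quasimorphism. Let y_1,…,y_k, z_1,…,z_k ∈ G satisfy: (i) [y_i, z_i] ∈ N for each i; (ii) x := [y_1,z_1]⋯[y_k,z_k] ∈ [G,N]; and (iii) |μ(x)| > (2k−1)·D(μ). Then |μ([y_1^n, z_1]⋯[y_k^n, z_k])| → ∞ as n → ∞. -/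
open Filter
open scoped commutatorElement

section Aux

variable {G : Type*} [Group G] {N : Subgroup G}

lemma aux_prod_bound (μ : G → ℝ) (D : ℝ)
    (hdef : ∀ v w : G, v ∈ N → w ∈ N → |μ (v * w) - μ v - μ w| ≤ D) :
    ∀ l : List G, (∀ x ∈ l, x ∈ N) → l ≠ [] →
      |μ l.prod - (l.map μ).sum| ≤ ((l.length : ℝ) - 1) * D
  | [], _, h => absurd rfl h
  | [a], _, _ => by simp
  | a :: b :: t, h, _ => by
      have hmem : ∀ x ∈ b :: t, x ∈ N := fun x hx => h x (List.mem_cons_of_mem _ hx)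
      have hrest : (b :: t).prod ∈ N := list_prod_mem hmem
      have h1 := hdef a (b :: t).prod (h a (List.mem_cons_self)) hrest
      have h2 := aux_prod_bound μ D hdef (b :: t) hmem (by simp)
      have hprod : (a :: b :: t).prod = a * (b :: t).prod := List.prod_cons
      have hsum : ((a :: b :: t).map μ).sum = μ a + ((b :: t).map μ).sum := by simp
      calc |μ (a :: b :: t).prod - ((a :: b :: t).map μ).sum|
          = |(μ (a * (b :: t).prod) - μ a - μ (b :: t).prod)
              + (μ (b :: t).prod - ((b :: t).map μ).sum)| := by rw [hprod, hsum]; ring_nf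
        _ ≤ |μ (a * (b :: t).prod) - μ a - μ (b :: t).prod|
              + |μ (b :: t).prod - ((b :: t).map μ).sum| := abs_add_le _ _
        _ ≤ D + (((b :: t).length : ℝ) - 1) * D := add_le_add h1 h2
        _ = ((((a :: b :: t)).length : ℝ) - 1) * D := by
              simp [List.length_cons]; push_cast; ring

lemma aux_comm_identity (y z : G) (n : ℕ) :
    ⁅y ^ (n + 1), z⁆ = y ^ n * ⁅y, z⁆ * (y ^ n)⁻¹ * ⁅y ^ n, z⁆ := by
  simp only [commutatorElement_def]
  group

lemma aux_pow_mem (hN : N.Normal) {y z : G} (hc : ⁅y, z⁆ ∈ N) :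
    ∀ n : ℕ, ⁅y ^ n, z⁆ ∈ N := by
  intro n
  induction n with
  | zero => simpa using N.one_mem
  | succ n ih =>
      rw [aux_comm_identity]
      exact N.mul_mem (hN.conj_mem _ hc _) ih

lemma aux_pow_bound (hN : N.Normal) (μ : G → ℝ) (D : ℝ)
    (hdef : ∀ v w : G, v ∈ N → w ∈ N → |μ (v * w) - μ v - μ w| ≤ D)
    (hinv : ∀ g w : G, w ∈ N → μ (g * w * g⁻¹) = μ w)
    {y z : G} (hc : ⁅y, z⁆ ∈ N) :
    ∀ n : ℕ, |μ ⁅y ^ (n + 1), z⁆ - ((n : ℝ) + 1) * μ ⁅y, z⁆| ≤ (n : ℝ) * D := by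
  intro n
  induction n with
  | zero => simp
  | succ n ih =>
      have hconj : y ^ (n + 1) * ⁅y, z⁆ * (y ^ (n + 1))⁻¹ ∈ N := hN.conj_mem _ hc _
      have hd := hdef _ _ hconj (aux_pow_mem hN hc (n + 1))
      rw [hinv (y ^ (n + 1)) ⁅y, z⁆ hc] at hd
      rw [aux_comm_identity y z (n + 1)]
      have heq : μ (y ^ (n + 1) * ⁅y, z⁆ * (y ^ (n + 1))⁻¹ * ⁅y ^ (n + 1), z⁆)
            - (((n : ℕ) + 1 : ℕ) + 1 : ℝ) * μ ⁅y, z⁆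
          = (μ (y ^ (n + 1) * ⁅y, z⁆ * (y ^ (n + 1))⁻¹ * ⁅y ^ (n + 1), z⁆)
              - μ ⁅y, z⁆ - μ ⁅y ^ (n + 1), z⁆)
            + (μ ⁅y ^ (n + 1), z⁆ - ((n : ℝ) + 1) * μ ⁅y, z⁆) := by push_cast; ring
      rw [heq]
      calc |_ + _| ≤ _ + _ := abs_add_le _ _
        _ ≤ D + (n : ℝ) * D := add_le_add hd ih
        _ = (((n : ℕ) + 1 : ℕ) : ℝ) * D := by push_cast; ring

end Aux

/-- Overflow argument: let `μ` be a `G`-invariant homogeneous quasimorphism on a normal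
subgroup `N` (defect bounded by `D`), and `y₁,…,y_k,z₁,…,z_k ∈ G` with (i) `[yᵢ,zᵢ] ∈ N`,
(ii) `x = [y₁,z₁]⋯[y_k,z_k] ∈ [G,N]`, and (iii) `|μ(x)| > (2k−1)·D`. Then
`|μ([y₁ⁿ,z₁]⋯[y_kⁿ,z_k])| → ∞` as `n → ∞`. -/
theorem overflow_tendsto_atTop {G : Type*} [Group G] (N : Subgroup G) (hN : N.Normal)
    (μ : G → ℝ) (D : ℝ) (hD : 0 ≤ D)
    (hdef : ∀ v w : G, v ∈ N → w ∈ N → |μ (v * w) - μ v - μ w| ≤ D)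
    (hhom : ∀ w : G, w ∈ N → ∀ n : ℤ, μ (w ^ n) = n * μ w)
    (hinv : ∀ g w : G, w ∈ N → μ (g * w * g⁻¹) = μ w)
    (k : ℕ) (hk : 1 ≤ k) (y z : Fin k → G)
    (h1 : ∀ i, ⁅y i, z i⁆ ∈ N)
    (h2 : (List.ofFn fun i => ⁅y i, z i⁆).prod ∈ ⁅(⊤ : Subgroup G), N⁆)
    (h3 : (2 * (k : ℝ) - 1) * D < |μ ((List.ofFn fun i => ⁅y i, z i⁆).prod)|) :
    Tendsto (fun n : ℕ => |μ ((List.ofFn fun i => ⁅(y i) ^ n, z i⁆).prod)|)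
      atTop atTop := by
  set S : ℝ := ∑ i, μ ⁅y i, z i⁆ with hS
  -- bound: |μ(P (m+1)) - (m+1)*S| ≤ (k-1)*D + m*k*D
  have key : ∀ m : ℕ,
      |μ ((List.ofFn fun i => ⁅(y i) ^ (m + 1), z i⁆).prod) - ((m : ℝ) + 1) * S|
        ≤ ((k : ℝ) - 1) * D + (m : ℝ) * (k : ℝ) * D := by
    intro m
    set l : List G := List.ofFn fun i => ⁅(y i) ^ (m + 1), z i⁆ with hl
    have hmem : ∀ x ∈ l, x ∈ N := by
      intro x hx
      rw [hl, List.mem_ofFn] at hx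
      obtain ⟨i, rfl⟩ := hx
      exact aux_pow_mem hN (h1 i) (m + 1)
    have hne : l ≠ [] := by
      rw [hl]
      simp only [ne_eq, List.ofFn_eq_nil_iff]
      omega
    have hb1 := aux_prod_bound μ D hdef l hmem hne
    have hlen : (l.length : ℝ) = (k : ℝ) := by rw [hl]; simp
    have hsum : (l.map μ).sum = ∑ i, μ ⁅(y i) ^ (m + 1), z i⁆ := by
      rw [hl, List.map_ofFn, List.sum_ofFn]; rfl
    have hb2 : |(∑ i, μ ⁅(y i) ^ (m + 1), z i⁆) - ((m : ℝ) + 1) * S|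
        ≤ (m : ℝ) * (k : ℝ) * D := by
      rw [hS, Finset.mul_sum, ← Finset.sum_sub_distrib]
      calc |∑ i, (μ ⁅(y i) ^ (m + 1), z i⁆ - ((m : ℝ) + 1) * μ ⁅y i, z i⁆)|
          ≤ ∑ i, |μ ⁅(y i) ^ (m + 1), z i⁆ - ((m : ℝ) + 1) * μ ⁅y i, z i⁆| :=
            Finset.abs_sum_le_sum_abs _ _
        _ ≤ ∑ _i : Fin k, (m : ℝ) * D := Finset.sum_le_sum fun i _ =>
            aux_pow_bound hN μ D hdef hinv (h1 i) m
        _ = (m : ℝ) * (k : ℝ) * D := by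
            rw [Finset.sum_const]; simp [Finset.card_univ]; ring
    calc |μ l.prod - ((m : ℝ) + 1) * S|
        = |(μ l.prod - (l.map μ).sum) + ((l.map μ).sum - ((m : ℝ) + 1) * S)| := by ring_nf
      _ ≤ |μ l.prod - (l.map μ).sum| + |(l.map μ).sum - ((m : ℝ) + 1) * S| := abs_add_le _ _
      _ ≤ ((k : ℝ) - 1) * D + (m : ℝ) * (k : ℝ) * D := by
          refine add_le_add ?_ ?_
          · rw [← hlen]; exact hb1
          · rw [hsum]; exact hb2
  -- |S| > k * D
  have hSbig : (k : ℝ) * D < |S| := by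
    have h4 := key 0
    simp only [Nat.cast_zero, zero_add, zero_mul, add_zero, one_mul, pow_one] at h4
    have habs := abs_sub_abs_le_abs_sub
      (μ ((List.ofFn fun i => ⁅(y i), z i⁆).prod)) S
    have hkk : (1 : ℝ) ≤ (k : ℝ) := by exact_mod_cast hk
    nlinarith [abs_nonneg S]
  set ε : ℝ := |S| - (k : ℝ) * D with hε'
  have hε : 0 < ε := by simp only [hε']; linarith
  -- eventual lower bound
  have lower : ∀ n : ℕ, 1 ≤ n →
      (n : ℝ) * ε ≤ |μ ((List.ofFn fun i => ⁅(y i) ^ n, z i⁆).prod)| := by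
    intro n hn
    obtain ⟨m, rfl⟩ := Nat.exists_eq_succ_of_ne_zero (by omega : n ≠ 0)
    have hkey := key m
    set P := μ ((List.ofFn fun i => ⁅(y i) ^ (m + 1), z i⁆).prod)
    have habs := abs_sub_abs_le_abs_sub (((m : ℝ) + 1) * S) P
    rw [abs_mul, abs_sub_comm] at habs
    have hm1 : |(m : ℝ) + 1| = (m : ℝ) + 1 := abs_of_nonneg (by positivity)
    rw [hm1] at habs
    push_cast
    have hmnn : (0 : ℝ) ≤ (m : ℝ) := Nat.cast_nonneg m
    nlinarith [abs_nonneg P]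
  have htend : Tendsto (fun n : ℕ => (n : ℝ) * ε) atTop atTop :=
    Tendsto.atTop_mul_const hε tendsto_natCast_atTop_atTop
  refine tendsto_atTop_mono' atTop ?_ htend
  filter_upwards [eventually_ge_atTop 1] with n hn
  exact lower n hn
end

section
/- Let G be a group, N a normal subgroup of G, μ : N → ℝ a G-invariant homogeneous quasimorphism with defect D(μ), and y_1,…,y_k, z_1,…,z_k ∈ G with [y_i, z_i] ∈ N for all i. Then for every positive integer n, |μ([y_1^n, z_1]⋯[y_k^n, z_k]) − n·μ([y_1, z_1]⋯[y_k, z_k])| ≤ (n(2k−1) − 1)·D(μ). -/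
open scoped commutatorElement

private lemma list_qm_bound {G : Type*} [Group G] (N : Subgroup G)
    (μ : G → ℝ) (D : ℝ)
    (hdef : ∀ v w : G, v ∈ N → w ∈ N → |μ (v * w) - μ v - μ w| ≤ D) :
    ∀ l : List G, l ≠ [] → (∀ x ∈ l, x ∈ N) →
      |μ l.prod - (l.map μ).sum| ≤ ((l.length : ℝ) - 1) * D := by
  intro l
  induction l with
  | nil => simp
  | cons a t ih =>
    intro _ hmem
    by_cases ht : t = []
    · subst ht; simp
    · have hmemt : ∀ x ∈ t, x ∈ N := fun x hx => hmem x (List.mem_cons_of_mem a hx)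
      have hprod : t.prod ∈ N := list_prod_mem hmemt
      have h1 := hdef a t.prod (hmem a (List.mem_cons_self)) hprod
      have h2 := ih ht hmemt
      simp only [List.prod_cons, List.map_cons, List.sum_cons, List.length_cons]
      have key : μ (a * t.prod) - (μ a + (t.map μ).sum) =
          (μ (a * t.prod) - μ a - μ t.prod) + (μ t.prod - (t.map μ).sum) := by ring
      rw [key]
      calc |(μ (a * t.prod) - μ a - μ t.prod) + (μ t.prod - (t.map μ).sum)|
          ≤ |μ (a * t.prod) - μ a - μ t.prod| + |μ t.prod - (t.map μ).sum| := abs_add_le _ _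
        _ ≤ D + ((t.length : ℝ) - 1) * D := add_le_add h1 h2
        _ = ((t.length + 1 : ℝ) - 1) * D := by ring
        _ = (((t.length + 1 : ℕ) : ℝ) - 1) * D := by push_cast; ring

private lemma pow_comm_bound {G : Type*} [Group G] (N : Subgroup G) (hN : N.Normal)
    (μ : G → ℝ) (D : ℝ)
    (hdef : ∀ v w : G, v ∈ N → w ∈ N → |μ (v * w) - μ v - μ w| ≤ D)
    (hinv : ∀ g w : G, w ∈ N → μ (g * w * g⁻¹) = μ w)
    (y z : G) (h1 : ⁅y, z⁆ ∈ N) :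
    ∀ n : ℕ, 1 ≤ n →
      ⁅y ^ n, z⁆ ∈ N ∧ |μ ⁅y ^ n, z⁆ - (n : ℝ) * μ ⁅y, z⁆| ≤ ((n : ℝ) - 1) * D := by
  intro n
  induction n with
  | zero => intro h; omega
  | succ m ih =>
    intro _
    by_cases hm : m = 0
    · subst hm
      refine ⟨by simpa using h1, ?_⟩
      simp
    · have hm1 : 1 ≤ m := Nat.one_le_iff_ne_zero.mpr hm
      obtain ⟨hmemm, hbm⟩ := ih hm1
      have hid : ⁅y ^ (m + 1), z⁆ = y * ⁅y ^ m, z⁆ * y⁻¹ * ⁅y, z⁆ := by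
        simp only [commutatorElement_def]
        group
      have hconj : y * ⁅y ^ m, z⁆ * y⁻¹ ∈ N := hN.conj_mem _ hmemm y
      have hd := hdef _ _ hconj h1
      have hi := hinv y ⁅y ^ m, z⁆ hmemm
      refine ⟨by rw [hid]; exact N.mul_mem hconj h1, ?_⟩
      rw [hid]
      have key : μ (y * ⁅y ^ m, z⁆ * y⁻¹ * ⁅y, z⁆) - ((m + 1 : ℕ) : ℝ) * μ ⁅y, z⁆ =
          (μ (y * ⁅y ^ m, z⁆ * y⁻¹ * ⁅y, z⁆) - μ (y * ⁅y ^ m, z⁆ * y⁻¹) - μ ⁅y, z⁆) +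
            (μ ⁅y ^ m, z⁆ - (m : ℝ) * μ ⁅y, z⁆) := by
        rw [hi]; push_cast; ring
      rw [key]
      calc |(μ (y * ⁅y ^ m, z⁆ * y⁻¹ * ⁅y, z⁆) - μ (y * ⁅y ^ m, z⁆ * y⁻¹) - μ ⁅y, z⁆) +
            (μ ⁅y ^ m, z⁆ - (m : ℝ) * μ ⁅y, z⁆)|
          ≤ |μ (y * ⁅y ^ m, z⁆ * y⁻¹ * ⁅y, z⁆) - μ (y * ⁅y ^ m, z⁆ * y⁻¹) - μ ⁅y, z⁆| +
            |μ ⁅y ^ m, z⁆ - (m : ℝ) * μ ⁅y, z⁆| := abs_add_le _ _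
        _ ≤ D + ((m : ℝ) - 1) * D := add_le_add hd hbm
        _ = (((m + 1 : ℕ) : ℝ) - 1) * D := by push_cast; ring

/-- Let `μ` be a `G`-invariant homogeneous quasimorphism on a normal subgroup `N`
(defect bounded by `D`) and `y₁,…,y_k,z₁,…,z_k ∈ G` with `[yᵢ,zᵢ] ∈ N` for all `i`.
Then for every `n ≥ 1`,
`|μ([y₁ⁿ,z₁]⋯[y_kⁿ,z_k]) − n·μ([y₁,z₁]⋯[y_k,z_k])| ≤ (n(2k−1)−1)·D`. -/
theorem quasimorphism_pow_commutator_estimate {G : Type*} [Group G]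
    (N : Subgroup G) (hN : N.Normal)
    (μ : G → ℝ) (D : ℝ) (hD : 0 ≤ D)
    (hdef : ∀ v w : G, v ∈ N → w ∈ N → |μ (v * w) - μ v - μ w| ≤ D)
    (hhom : ∀ w : G, w ∈ N → ∀ n : ℤ, μ (w ^ n) = n * μ w)
    (hinv : ∀ g w : G, w ∈ N → μ (g * w * g⁻¹) = μ w)
    (k : ℕ) (hk : 1 ≤ k) (y z : Fin k → G)
    (h1 : ∀ i, ⁅y i, z i⁆ ∈ N) (n : ℕ) (hn : 0 < n) :
    |μ ((List.ofFn fun i => ⁅(y i) ^ n, z i⁆).prod) -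
        n * μ ((List.ofFn fun i => ⁅y i, z i⁆).prod)| ≤
      ((n : ℝ) * (2 * (k : ℝ) - 1) - 1) * D := by
  have hpc := fun i => pow_comm_bound N hN μ D hdef hinv (y i) (z i) (h1 i) n hn
  set Ln := List.ofFn fun i => ⁅(y i) ^ n, z i⁆ with hLn
  set L1 := List.ofFn fun i => ⁅y i, z i⁆ with hL1
  have hLnne : Ln ≠ [] := by
    intro h
    have := congrArg List.length h
    simp [hLn] at this
    omega
  have hL1ne : L1 ≠ [] := by
    intro h
    have := congrArg List.length h
    simp [hL1] at this
    omega
  have hLnmem : ∀ x ∈ Ln, x ∈ N := by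
    intro x hx
    rw [hLn, List.mem_ofFn] at hx
    obtain ⟨i, rfl⟩ := hx
    exact (hpc i).1
  have hL1mem : ∀ x ∈ L1, x ∈ N := by
    intro x hx
    rw [hL1, List.mem_ofFn] at hx
    obtain ⟨i, rfl⟩ := hx
    exact h1 i
  have hAn := list_qm_bound N μ D hdef Ln hLnne hLnmem
  have hA1 := list_qm_bound N μ D hdef L1 hL1ne hL1mem
  have hlenn : Ln.length = k := by simp [hLn]
  have hlen1 : L1.length = k := by simp [hL1]
  rw [hlenn] at hAn
  rw [hlen1] at hA1
  set Sn := ∑ i : Fin k, μ ⁅(y i) ^ n, z i⁆ with hSn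
  set S1 := ∑ i : Fin k, μ ⁅y i, z i⁆ with hS1
  have hsumn : (Ln.map μ).sum = Sn := by
    rw [hLn, List.map_ofFn, List.sum_ofFn]; rfl
  have hsum1 : (L1.map μ).sum = S1 := by
    rw [hL1, List.map_ofFn, List.sum_ofFn]; rfl
  rw [hsumn] at hAn
  rw [hsum1] at hA1
  -- middle bound
  have hmid : |Sn - (n : ℝ) * S1| ≤ (k : ℝ) * (((n : ℝ) - 1) * D) := by
    have : Sn - (n : ℝ) * S1 = ∑ i : Fin k, (μ ⁅(y i) ^ n, z i⁆ - (n : ℝ) * μ ⁅y i, z i⁆) := by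
      rw [hSn, hS1, Finset.mul_sum, ← Finset.sum_sub_distrib]
    rw [this]
    calc |∑ i : Fin k, (μ ⁅(y i) ^ n, z i⁆ - (n : ℝ) * μ ⁅y i, z i⁆)|
        ≤ ∑ i : Fin k, |μ ⁅(y i) ^ n, z i⁆ - (n : ℝ) * μ ⁅y i, z i⁆| :=
          Finset.abs_sum_le_sum_abs _ _
      _ ≤ ∑ _i : Fin k, ((n : ℝ) - 1) * D :=
          Finset.sum_le_sum fun i _ => (hpc i).2
      _ = (k : ℝ) * (((n : ℝ) - 1) * D) := by simp [Finset.sum_const, mul_comm]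
  have hA1' : |(n : ℝ) * (S1 - μ L1.prod)| ≤ (n : ℝ) * (((k : ℝ) - 1) * D) := by
    rw [abs_mul, Nat.abs_cast, abs_sub_comm]
    exact mul_le_mul_of_nonneg_left hA1 (Nat.cast_nonneg n)
  have key : μ Ln.prod - (n : ℝ) * μ L1.prod =
      (μ Ln.prod - Sn) + (Sn - (n : ℝ) * S1) + (n : ℝ) * (S1 - μ L1.prod) := by ring
  rw [key]
  calc |(μ Ln.prod - Sn) + (Sn - (n : ℝ) * S1) + (n : ℝ) * (S1 - μ L1.prod)|
      ≤ |(μ Ln.prod - Sn) + (Sn - (n : ℝ) * S1)| + |(n : ℝ) * (S1 - μ L1.prod)| := abs_add_le _ _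
    _ ≤ |μ Ln.prod - Sn| + |Sn - (n : ℝ) * S1| + |(n : ℝ) * (S1 - μ L1.prod)| := by
        have := abs_add_le (μ Ln.prod - Sn) (Sn - (n : ℝ) * S1)
        linarith
    _ ≤ ((k : ℝ) - 1) * D + (k : ℝ) * (((n : ℝ) - 1) * D) + (n : ℝ) * (((k : ℝ) - 1) * D) := by
        exact add_le_add (add_le_add hAn hmid) hA1'
    _ = ((n : ℝ) * (2 * (k : ℝ) - 1) - 1) * D := by ring
end

section
/- Let G be a group, N a normal subgroup, μ a G-invariant homogeneous quasimorphism on N with defect D(μ). If x ∈ N can be written as a product of k mixed commutators [g_1,w_1]⋯[g_k,w_k] with g_i ∈ G, w_i ∈ N, then |μ(x)| ≤ (2k − 1)·D(μ). Consequently, scl_{G,N}(x) ≥ |μ(x)|/(2 D(μ)). -/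
open Filter
open scoped commutatorElement

/-- The mixed commutator length: the least `k` such that `x` is a product of `k` mixed
commutators `[g, w]` with `g ∈ G`, `w ∈ N`. -/
noncomputable def mixedCommutatorLength {G : Type*} [Group G] (N : Subgroup G) (x : G) : ℕ :=
  sInf {k : ℕ | ∃ (g w : Fin k → G), (∀ i, w i ∈ N) ∧
    x = (List.ofFn fun i => ⁅g i, w i⁆).prod}

/-- The stable mixed commutator length `scl_{G,N}(x) = lim_m cl_{G,N}(xᵐ)/m`. -/
noncomputable def stableMixedCommutatorLength {G : Type*} [Group G] (N : Subgroup G)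
    (x : G) : ℝ :=
  liminf (fun m : ℕ => (mixedCommutatorLength N (x ^ (m + 1)) : ℝ) / ((m : ℝ) + 1)) atTop

section Aux

variable {G : Type*} [Group G] {N : Subgroup G}

theorem mu_inv_aux (μ : G → ℝ) (hhom : ∀ w : G, w ∈ N → ∀ n : ℤ, μ (w ^ n) = n * μ w)
    (w : G) (hw : w ∈ N) : μ w⁻¹ = - μ w := by
  have := hhom w hw (-1); simpa using this

theorem comm_mem_aux (hN : N.Normal) (g w : G) (hw : w ∈ N) : ⁅g, w⁆ ∈ N := by
  rw [commutatorElement_def]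
  exact N.mul_mem (hN.conj_mem w hw g) (N.inv_mem hw)

theorem mu_comm_le_aux (μ : G → ℝ) (D : ℝ)
    (hN : N.Normal)
    (hdef : ∀ v w : G, v ∈ N → w ∈ N → |μ (v * w) - μ v - μ w| ≤ D)
    (hhom : ∀ w : G, w ∈ N → ∀ n : ℤ, μ (w ^ n) = n * μ w)
    (hinv : ∀ g w : G, w ∈ N → μ (g * w * g⁻¹) = μ w)
    (g w : G) (hw : w ∈ N) : |μ ⁅g, w⁆| ≤ D := by
  have h1 := hdef (g * w * g⁻¹) w⁻¹ (hN.conj_mem w hw g) (N.inv_mem hw)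
  rw [hinv g w hw, mu_inv_aux μ hhom w hw] at h1
  have e : g * w * g⁻¹ * w⁻¹ = ⁅g, w⁆ := (commutatorElement_def g w).symm
  rw [e] at h1
  simpa using h1

theorem mu_prod_le_aux (μ : G → ℝ) (D : ℝ)
    (hN : N.Normal)
    (hdef : ∀ v w : G, v ∈ N → w ∈ N → |μ (v * w) - μ v - μ w| ≤ D)
    (hhom : ∀ w : G, w ∈ N → ∀ n : ℤ, μ (w ^ n) = n * μ w)
    (hinv : ∀ g w : G, w ∈ N → μ (g * w * g⁻¹) = μ w) :
    ∀ (n : ℕ) (g w : Fin (n+1) → G), (∀ i, w i ∈ N) →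
    |μ ((List.ofFn fun i => ⁅g i, w i⁆).prod)| ≤ (2 * ((n:ℝ)+1) - 1) * D := by
  intro n
  induction n with
  | zero =>
    intro g w hw
    have := mu_comm_le_aux μ D hN hdef hhom hinv (g 0) (w 0) (hw 0)
    simp only [List.ofFn_succ, List.ofFn_zero, List.prod_cons, List.prod_nil, mul_one]
    norm_num
    exact this
  | succ n IH =>
    intro g w hw
    rw [List.ofFn_succ, List.prod_cons]
    set p := (List.ofFn fun i : Fin (n+1) => ⁅g i.succ, w i.succ⁆).prod with hp
    have hpN : p ∈ N := by
      apply Subgroup.list_prod_mem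
      intro y hy
      rw [List.mem_ofFn] at hy
      obtain ⟨i, rfl⟩ := hy
      exact comm_mem_aux hN _ _ (hw i.succ)
    have h1 := hdef ⁅g 0, w 0⁆ p (comm_mem_aux hN _ _ (hw 0)) hpN
    have h2 := mu_comm_le_aux μ D hN hdef hhom hinv (g 0) (w 0) (hw 0)
    have h3 := IH (fun i => g i.succ) (fun i => w i.succ) (fun i => hw i.succ)
    have habs : |μ (⁅g 0, w 0⁆ * p)| ≤ D + |μ ⁅g 0, w 0⁆| + |μ p| := by
      have h4 : |μ (⁅g 0, w 0⁆ * p) - (μ ⁅g 0, w 0⁆ + μ p)| ≤ D := by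
        rw [← sub_sub]; exact h1
      have h5 := abs_add_le (μ ⁅g 0, w 0⁆) (μ p)
      linarith [abs_sub_abs_le_abs_sub (μ (⁅g 0, w 0⁆ * p)) (μ ⁅g 0, w 0⁆ + μ p)]
    push_cast
    push_cast at h3
    linarith

theorem prodcomm_mul {k₁ k₂ : ℕ} {a b : G}
    (ha : ∃ g w : Fin k₁ → G, (∀ i, w i ∈ N) ∧ a = (List.ofFn fun i => ⁅g i, w i⁆).prod)
    (hb : ∃ g w : Fin k₂ → G, (∀ i, w i ∈ N) ∧ b = (List.ofFn fun i => ⁅g i, w i⁆).prod) :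
    ∃ g w : Fin (k₁ + k₂) → G, (∀ i, w i ∈ N) ∧
      a * b = (List.ofFn fun i => ⁅g i, w i⁆).prod := by
  obtain ⟨g₁, w₁, hw₁, rfl⟩ := ha
  obtain ⟨g₂, w₂, hw₂, rfl⟩ := hb
  refine ⟨Fin.append g₁ g₂, Fin.append w₁ w₂, ?_, ?_⟩
  · intro i
    refine Fin.addCases (fun i => ?_) (fun i => ?_) i
    · simpa [Fin.append_left] using hw₁ i
    · simpa [Fin.append_right] using hw₂ i
  · have e : (fun i : Fin (k₁+k₂) => ⁅Fin.append g₁ g₂ i, Fin.append w₁ w₂ i⁆)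
        = Fin.append (fun i => ⁅g₁ i, w₁ i⁆) (fun i => ⁅g₂ i, w₂ i⁆) := by
      funext i
      refine Fin.addCases (fun i => ?_) (fun i => ?_) i <;>
        simp [Fin.append_left, Fin.append_right]
    rw [e, List.ofFn_fin_append, List.prod_append]

theorem prodcomm_pow {k : ℕ} {x : G}
    (hx : ∃ g w : Fin k → G, (∀ i, w i ∈ N) ∧ x = (List.ofFn fun i => ⁅g i, w i⁆).prod) :
    ∀ m : ℕ, ∃ g w : Fin (k + k * m) → G, (∀ i, w i ∈ N) ∧
      x ^ (m+1) = (List.ofFn fun i => ⁅g i, w i⁆).prod := by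
  intro m
  induction m with
  | zero =>
    simp only [zero_add, pow_one]
    exact hx
  | succ m IH =>
    rw [Nat.mul_succ, ← Nat.add_assoc, pow_succ]
    exact prodcomm_mul IH hx

end Aux

/-- If `μ` is a `G`-invariant homogeneous quasimorphism on `N ⊴ G` (defect bounded by `D`)
and `x ∈ N` is a product of `k` mixed commutators, then `|μ(x)| ≤ (2k−1)·D`; consequently
`scl_{G,N}(x) ≥ |μ(x)|/(2D)`. -/
theorem abs_quasimorphism_le_and_scl_lower_bound {G : Type*} [Group G]
    (N : Subgroup G) (hN : N.Normal)
    (μ : G → ℝ) (D : ℝ) (hD : 0 ≤ D)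
    (hdef : ∀ v w : G, v ∈ N → w ∈ N → |μ (v * w) - μ v - μ w| ≤ D)
    (hhom : ∀ w : G, w ∈ N → ∀ n : ℤ, μ (w ^ n) = n * μ w)
    (hinv : ∀ g w : G, w ∈ N → μ (g * w * g⁻¹) = μ w)
    (k : ℕ) (hk : 1 ≤ k) (x : G) (g w : Fin k → G) (hw : ∀ i, w i ∈ N)
    (hx : x = (List.ofFn fun i => ⁅g i, w i⁆).prod) :
    |μ x| ≤ (2 * (k : ℝ) - 1) * D ∧
      |μ x| / (2 * D) ≤ stableMixedCommutatorLength N x := by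
  -- first part
  obtain ⟨n, rfl⟩ : ∃ n, k = n + 1 := ⟨k - 1, (Nat.succ_pred_eq_of_pos hk).symm⟩
  have part1 : |μ x| ≤ (2 * ((n:ℕ)+1 : ℝ) - 1) * D := by
    rw [hx]; exact mu_prod_le_aux μ D hN hdef hhom hinv n g w hw
  have part1' : |μ x| ≤ (2 * (((n:ℕ)+1 : ℕ) : ℝ) - 1) * D := by push_cast; push_cast at part1; linarith
  refine ⟨part1', ?_⟩
  -- x ∈ N
  have hxN : x ∈ N := by
    rw [hx]
    apply Subgroup.list_prod_mem
    intro y hy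
    rw [List.mem_ofFn] at hy
    obtain ⟨i, rfl⟩ := hy
    exact comm_mem_aux hN _ _ (hw i)
  have hxpow : ∀ m : ℕ, ∃ gg ww : Fin ((n+1) + (n+1) * m) → G, (∀ i, ww i ∈ N) ∧
      x ^ (m+1) = (List.ofFn fun i => ⁅gg i, ww i⁆).prod :=
    prodcomm_pow ⟨g, w, hw, hx⟩
  -- the key per-m bound
  have key : ∀ m : ℕ, |μ x| / (2 * D) ≤
      (mixedCommutatorLength N (x ^ (m+1)) : ℝ) / ((m : ℝ) + 1) := by
    intro m
    set S := {c : ℕ | ∃ (gg ww : Fin c → G), (∀ i, ww i ∈ N) ∧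
      x ^ (m+1) = (List.ofFn fun i => ⁅gg i, ww i⁆).prod} with hS
    have hSne : S.Nonempty := ⟨(n+1) + (n+1) * m, hxpow m⟩
    have hcl : mixedCommutatorLength N (x ^ (m+1)) = sInf S := rfl
    have hmem : sInf S ∈ S := Nat.sInf_mem hSne
    have hmpos : (0:ℝ) < (m : ℝ) + 1 := by positivity
    have hmu_pow : μ (x ^ (m+1)) = ((m:ℝ) + 1) * μ x := by
      have := hhom x hxN ((m:ℤ)+1)
      rw [show ((m:ℤ)+1) = ((m+1 : ℕ) : ℤ) by push_cast; ring, zpow_natCast] at this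
      rw [this]; push_cast; ring
    rcases Nat.eq_zero_or_pos (sInf S) with hc0 | hcpos
    · -- x^(m+1) = 1, hence μ x = 0
      rw [hc0] at hmem
      obtain ⟨gg, ww, hww, hprod⟩ := hmem
      have hone : x ^ (m+1) = 1 := by simpa using hprod
      have : ((m:ℝ) + 1) * μ x = 0 := by
        rw [← hmu_pow, hone]
        have := hhom 1 (N.one_mem) 0
        simpa using this
      have hmux : μ x = 0 := by
        rcases mul_eq_zero.mp this with h | h
        · exact absurd h (ne_of_gt hmpos)
        · exact h
      rw [hmux]
      simp
      positivity
    · obtain ⟨c, hc⟩ : ∃ c, sInf S = c + 1 := ⟨sInf S - 1, (Nat.succ_pred_eq_of_pos hcpos).symm⟩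
      rw [hc] at hmem
      obtain ⟨gg, ww, hww, hprod⟩ := hmem
      have hbound : |μ (x ^ (m+1))| ≤ (2 * ((c:ℝ)+1) - 1) * D := by
        rw [hprod]; exact mu_prod_le_aux μ D hN hdef hhom hinv c gg ww hww
      have hb2 : ((m:ℝ) + 1) * |μ x| ≤ 2 * ((c:ℝ)+1) * D := by
        have : |μ (x ^ (m+1))| = ((m:ℝ)+1) * |μ x| := by
          rw [hmu_pow, abs_mul, abs_of_pos hmpos]
        rw [this] at hbound
        nlinarith
      rcases eq_or_lt_of_le hD with hD0 | hDpos
      · have hmu0 : μ x = 0 := by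
          have h := part1'
          rw [← hD0, mul_zero] at h
          exact abs_nonpos_iff.mp h
        rw [hmu0, abs_zero]
        simp
        positivity
      · rw [div_le_div_iff₀ (by positivity) hmpos]
        rw [hcl, hc]
        push_cast
        nlinarith
  -- conclude via liminf
  have hbddabove : ∀ m : ℕ, (mixedCommutatorLength N (x ^ (m+1)) : ℝ) / ((m : ℝ) + 1)
      ≤ ((n:ℝ) + 1) := by
    intro m
    have hle : mixedCommutatorLength N (x ^ (m+1)) ≤ (n+1) + (n+1) * m :=
      Nat.sInf_le (hxpow m)
    have hmpos : (0:ℝ) < (m : ℝ) + 1 := by positivity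
    rw [div_le_iff₀ hmpos]
    calc (mixedCommutatorLength N (x ^ (m+1)) : ℝ) ≤ (((n+1) + (n+1) * m : ℕ) : ℝ) := by
          exact_mod_cast hle
      _ = ((n:ℝ)+1) * ((m:ℝ)+1) := by push_cast; ring
  unfold stableMixedCommutatorLength
  apply Filter.le_liminf_of_le
  · exact (isBoundedUnder_of ⟨((n:ℝ)+1), hbddabove⟩).isCoboundedUnder_ge
  · exact Eventually.of_forall key
end

section
/- Let ℓ ≥ 2 and R_ℓ = ⟨a, b | [a,b]^ℓ⟩. The map p* : H²(R_ℓ/R_ℓ'; ℝ) → H²(R_ℓ; ℝ) induced by the abelianization projection p : R_ℓ → R_ℓ/R_ℓ' ≅ ℤ² is an isomorphism; in particular H²(R_ℓ; ℝ) ≅ ℝ. -/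
/-- An inhomogeneous real-valued group 2-cocycle. -/
def IsTwoCocycle {G : Type*} [Group G] (c : G → G → ℝ) : Prop :=
  ∀ g₁ g₂ g₃ : G, c g₂ g₃ - c (g₁ * g₂) g₃ + c g₁ (g₂ * g₃) - c g₁ g₂ = 0

/-- An inhomogeneous real-valued group 2-coboundary. -/
def IsTwoCoboundary {G : Type*} [Group G] (c : G → G → ℝ) : Prop :=
  ∃ u : G → ℝ, ∀ g₁ g₂ : G, c g₁ g₂ = u g₂ - u (g₁ * g₂) + u g₁

open scoped commutatorElement

section General
variable {H : Type*} [Group H] {c : H → H → ℝ}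

lemma cocycle_norm_r (hc : IsTwoCocycle c) (g : H) : c g 1 = c 1 1 := by
  have := hc g 1 1; simp only [mul_one, one_mul] at this; linarith

lemma cocycle_norm_l (hc : IsTwoCocycle c) (g : H) : c 1 g = c 1 1 := by
  have := hc 1 1 g; simp only [mul_one, one_mul] at this; linarith

lemma cocycle_inv (hc : IsTwoCocycle c) (g : H) : c g⁻¹ g = c g g⁻¹ := by
  have := hc g g⁻¹ g
  simp only [mul_inv_cancel, inv_mul_cancel] at this
  have h1 := cocycle_norm_r hc g
  have h2 := cocycle_norm_l hc g
  linarith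

/-- The total space of the central extension associated to a 2-cocycle. -/
structure ExtPt (H : Type*) where
  r : ℝ
  g : H

def extGroup (c : H → H → ℝ) (hc : IsTwoCocycle c) : Group (ExtPt H) where
  mul x y := ⟨x.r + y.r + c x.g y.g, x.g * y.g⟩
  one := ⟨-c 1 1, 1⟩
  inv x := ⟨-x.r - c 1 1 - c x.g x.g⁻¹, x.g⁻¹⟩
  mul_assoc x y z := by
    have := hc x.g y.g z.g
    refine congrArg₂ ExtPt.mk ?_ (mul_assoc _ _ _)
    show x.r + y.r + c x.g y.g + z.r + c (x.g * y.g) z.g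
      = x.r + (y.r + z.r + c y.g z.g) + c x.g (y.g * z.g)
    linarith
  one_mul x := by
    have := cocycle_norm_l hc x.g
    show ExtPt.mk (-c 1 1 + x.r + c 1 x.g) (1 * x.g) = x
    rw [this, one_mul]
    refine congrArg₂ ExtPt.mk (by ring) rfl
  mul_one x := by
    have := cocycle_norm_r hc x.g
    show ExtPt.mk (x.r + -c 1 1 + c x.g 1) (x.g * 1) = x
    rw [this, mul_one]
    refine congrArg₂ ExtPt.mk (by ring) rfl
  inv_mul_cancel x := by
    have := cocycle_inv hc x.g
    show ExtPt.mk (-x.r - c 1 1 - c x.g x.g⁻¹ + x.r + c x.g⁻¹ x.g) (x.g⁻¹ * x.g)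
      = ExtPt.mk (-c 1 1) 1
    rw [inv_mul_cancel]
    refine congrArg₂ ExtPt.mk (by linarith) rfl

/-- Pulling back a 2-cocycle along a homomorphism from a free group yields a coboundary,
in a precise functional form. -/
lemma exists_u {α : Type*} (c : H → H → ℝ) (hc : IsTwoCocycle c) (f : FreeGroup α →* H) :
    ∃ u : FreeGroup α → ℝ, ∀ g h, c (f g) (f h) = u h - u (g * h) + u g := by
  letI := extGroup c hc
  have hmul : ∀ x y : ExtPt H, x * y = ⟨x.r + y.r + c x.g y.g, x.g * y.g⟩ := fun _ _ => rfl
  let σ : FreeGroup α →* ExtPt H := FreeGroup.lift (fun x => ⟨0, f (FreeGroup.of x)⟩)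
  have hsnd : ∀ w : FreeGroup α, (σ w).g = f w := by
    let π₂ : ExtPt H →* H :=
      { toFun := fun x => x.g, map_one' := rfl, map_mul' := fun _ _ => rfl }
    intro w
    have : π₂.comp σ = f := by
      apply FreeGroup.ext_hom
      intro a
      show (σ (FreeGroup.of a)).g = f (FreeGroup.of a)
      rw [show σ (FreeGroup.of a) = ⟨0, f (FreeGroup.of a)⟩ from FreeGroup.lift_apply_of]
    exact congrFun (congrArg (fun m => m.toFun) this) w
  refine ⟨fun w => -(σ w).r, fun g h => ?_⟩
  have := congrArg ExtPt.r (map_mul σ g h)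
  rw [hmul] at this
  simp only at this
  rw [hsnd g, hsnd h] at this
  show c (f g) (f h) = -(σ h).r - -(σ (g * h)).r + -(σ g).r
  linarith

section WithU
variable {K : Type*} [Group K] (hc : IsTwoCocycle c) (f : K →* H) (u : K → ℝ)
  (hu : ∀ g h, c (f g) (f h) = u h - u (g * h) + u g)

include hu

lemma u_mul (g h : K) : u (g * h) = u g + u h - c (f g) (f h) := by
  have := hu g h; linarith

include hc

lemma u_one : u 1 = c 1 1 := by
  have := hu 1 1
  simp only [mul_one, map_one] at this
  linarith

lemma u_inv (g : K) : u g⁻¹ = c 1 1 - u g + c (f g) (f g⁻¹) := by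
  have h1 := u_mul f u hu g g⁻¹
  rw [mul_inv_cancel, u_one hc f u hu] at h1
  linarith

lemma u_conj {k : K} (hk : f k = 1) (g : K) : u (g * k * g⁻¹) = u k := by
  have h1 : u (g * k) = u g + u k - c 1 1 := by
    rw [u_mul f u hu, hk, cocycle_norm_r hc]
  have h2 := u_mul f u hu (g * k) g⁻¹
  have h3 := u_inv hc f u hu g
  have h4 : f (g * k) = f g := by rw [map_mul, hk, mul_one]
  rw [h4] at h2
  rw [h2, h1, h3]; ring

lemma u_commutator {x y : K} (hxy : ∀ z, c (f (x * y)) z = c (f (y * x)) z) :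
    u ⁅x, y⁆ = c (f y) (f x) - c (f x) (f y) + c 1 1 := by
  have hcom : ⁅x, y⁆ = (x * y) * (y * x)⁻¹ := by group
  have h1 := u_mul f u hu (x * y) (y * x)⁻¹
  have h2 := u_inv hc f u hu (y * x)
  have h3 := hxy (f (y * x)⁻¹)
  have h4 := u_mul f u hu x y
  have h5 := u_mul f u hu y x
  rw [hcom, h1, h3, map_inv] at *
  rw [h2, h4, h5]; ring

lemma u_pow {x : K} (hx : ∀ z, c z (f x) = c 1 1) :
    ∀ n : ℕ, u (x ^ n) = n * (u x - c 1 1) + c 1 1 := by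
  intro n
  induction n with
  | zero => simpa using u_one hc f u hu
  | succ n ih =>
    rw [pow_succ, u_mul f u hu, ih, hx]
    push_cast; ring

lemma u_closure {T : Set K} (hT1 : ∀ t ∈ T, f t = 1) (hT2 : ∀ t ∈ T, u t = c 1 1) :
    ∀ k ∈ Subgroup.closure T, f k = 1 ∧ u k = c 1 1 := by
  intro k hk
  induction hk using Subgroup.closure_induction with
  | mem x hx => exact ⟨hT1 x hx, hT2 x hx⟩
  | one => exact ⟨map_one f, u_one hc f u hu⟩
  | mul x y hx hy ihx ihy =>
    refine ⟨by rw [map_mul, ihx.1, ihy.1, mul_one], ?_⟩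
    rw [u_mul f u hu, ihx.1, ihy.1, ihx.2, ihy.2, cocycle_norm_r hc]; ring
  | inv x hx ihx =>
    have h5 : f x⁻¹ = 1 := by rw [map_inv, ihx.1, inv_one]
    refine ⟨h5, ?_⟩
    rw [u_inv hc f u hu, ihx.2, ihx.1, h5]; ring

lemma u_normalClosure {T : Set K} (hT1 : ∀ t ∈ T, f t = 1) (hT2 : ∀ t ∈ T, u t = c 1 1) :
    ∀ k ∈ Subgroup.normalClosure T, f k = 1 ∧ u k = c 1 1 := by
  refine u_closure hc f u hu ?_ ?_
  · intro t ht
    rcases Group.mem_conjugatesOfSet_iff.1 ht with ⟨s, hs, hconj⟩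
    rcases isConj_iff.1 hconj with ⟨g, rfl⟩
    rw [map_mul, map_mul, hT1 s hs, map_inv, mul_one, mul_inv_cancel]
  · intro t ht
    rcases Group.mem_conjugatesOfSet_iff.1 ht with ⟨s, hs, hconj⟩
    rcases isConj_iff.1 hconj with ⟨g, rfl⟩
    rw [u_conj hc f u hu (hT1 s hs), hT2 s hs]

lemma descend (hf : Function.Surjective f) (hker : ∀ k, f k = 1 → u k = c 1 1) :
    IsTwoCoboundary c := by
  refine ⟨fun x => u (Function.surjInv hf x), fun x y => ?_⟩
  set g := Function.surjInv hf x with hg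
  set h := Function.surjInv hf y with hh
  set s := Function.surjInv hf (x * y) with hs
  have hfg : f g = x := Function.surjInv_eq hf x
  have hfh : f h = y := Function.surjInv_eq hf y
  have hfs : f s = x * y := Function.surjInv_eq hf (x * y)
  have hk : f (s⁻¹ * (g * h)) = 1 := by
    rw [map_mul, map_mul, map_inv, hfs, hfg, hfh, inv_mul_cancel]
  have hgh : u (g * h) = u s := by
    have : g * h = s * (s⁻¹ * (g * h)) := by group
    rw [this, u_mul f u hu, hker _ hk, map_mul, map_mul, map_inv, hfs, hfg, hfh,
      inv_mul_cancel]
    have := cocycle_norm_r hc (x * y)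
    linarith
  have := hu g h
  rw [hfg, hfh, hgh] at this
  exact this

end WithU
end General

section Specific

/-- Subtracting two "potentials" for the same pulled-back cocycle gives an additive map,
hence the values on powers of commutators agree. -/
lemma valid_unique_on_comm_pow {L : Type*} [Group L] (c : L → L → ℝ)
    (f : FreeGroup Bool →* L) (u u' : FreeGroup Bool → ℝ)
    (hu : ∀ g h, c (f g) (f h) = u h - u (g * h) + u g)
    (hu' : ∀ g h, c (f g) (f h) = u' h - u' (g * h) + u' g)
    (x y : FreeGroup Bool) (n : ℕ) : u (⁅x, y⁆ ^ n) = u' (⁅x, y⁆ ^ n) := by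
  set w : FreeGroup Bool → ℝ := fun g => u g - u' g with hwdef
  have hw : ∀ g h, w (g * h) = w g + w h := by
    intro g h
    have h1 := hu g h; have h2 := hu' g h
    simp only [hwdef]; linarith
  have hw1 : w 1 = 0 := by have := hw 1 1; rw [mul_one] at this; linarith
  have hwi : ∀ g, w g⁻¹ = -w g := by
    intro g; have h2 := hw g g⁻¹; rw [mul_inv_cancel, hw1] at h2; linarith
  have hwc : w ⁅x, y⁆ = 0 := by
    rw [commutatorElement_def, hw, hw, hw, hwi, hwi]; ring
  have hwp : w (⁅x, y⁆ ^ n) = 0 := by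
    induction n with
    | zero => simpa using hw1
    | succ m ih => rw [pow_succ, hw, ih, hwc]; ring
  have : u (⁅x, y⁆ ^ n) - u' (⁅x, y⁆ ^ n) = 0 := hwp
  linarith

variable (ℓ : ℕ)

private abbrev relS : Set (FreeGroup Bool) :=
  ({⁅FreeGroup.of true, FreeGroup.of false⁆ ^ ℓ} : Set (FreeGroup Bool))

private abbrev HG := PresentedGroup (relS ℓ)

private abbrev prj : FreeGroup Bool →* HG ℓ := PresentedGroup.mk (relS ℓ)

private abbrev wa : FreeGroup Bool := FreeGroup.of true
private abbrev wb : FreeGroup Bool := FreeGroup.of false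
private abbrev wrel : FreeGroup Bool := ⁅wa, wb⁆ ^ ℓ

lemma prj_rel : prj ℓ (wrel ℓ) = 1 := by
  have : wrel ℓ ∈ Subgroup.normalClosure (relS ℓ) :=
    Subgroup.subset_normalClosure rfl
  exact (QuotientGroup.eq_one_iff _).2 this

lemma prj_ker {k : FreeGroup Bool} (hk : prj ℓ k = 1) :
    k ∈ Subgroup.normalClosure (relS ℓ) :=
  (QuotientGroup.eq_one_iff _).1 hk

/-- The two exponent-sum homomorphisms on the presented group. -/
noncomputable def expHom (v : Bool → ℝ) :
    HG ℓ →* Multiplicative ℝ := by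
  refine PresentedGroup.toGroup (f := fun x => Multiplicative.ofAdd (v x)) ?_
  intro r hr
  rcases hr with rfl
  rw [map_pow, map_commutatorElement]
  rw [commutatorElement_eq_one_iff_mul_comm.2 (mul_comm _ _), one_pow]

lemma expHom_prj (v : Bool → ℝ) (w : FreeGroup Bool) :
    expHom ℓ v (prj ℓ w) = FreeGroup.lift (fun x => Multiplicative.ofAdd (v x)) w := by
  have : (expHom ℓ v).comp (prj ℓ)
      = FreeGroup.lift (fun x => Multiplicative.ofAdd (v x)) := by
    apply FreeGroup.ext_hom
    intro a
    simp only [MonoidHom.comp_apply]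
    rw [show prj ℓ (FreeGroup.of a) = PresentedGroup.of a from rfl]
    rw [expHom, PresentedGroup.toGroup.of, FreeGroup.lift_apply_of]
  exact congrFun (congrArg (fun m => m.toFun) this) w

noncomputable def Aexp : HG ℓ → ℝ := fun x => Multiplicative.toAdd (expHom ℓ (fun b => cond b 1 0) x)
noncomputable def Bexp : HG ℓ → ℝ := fun x => Multiplicative.toAdd (expHom ℓ (fun b => cond b 0 1) x)

lemma Aexp_mul (x y : HG ℓ) : Aexp ℓ (x * y) = Aexp ℓ x + Aexp ℓ y := by
  simp only [Aexp, map_mul]; rfl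
lemma Bexp_mul (x y : HG ℓ) : Bexp ℓ (x * y) = Bexp ℓ x + Bexp ℓ y := by
  simp only [Bexp, map_mul]; rfl
lemma Aexp_one : Aexp ℓ 1 = 0 := by simp only [Aexp, map_one]; rfl
lemma Bexp_one : Bexp ℓ 1 = 0 := by simp only [Bexp, map_one]; rfl
lemma Aexp_a : Aexp ℓ (prj ℓ (wa)) = 1 := by
  simp only [Aexp, expHom_prj, FreeGroup.lift_apply_of]; rfl
lemma Aexp_b : Aexp ℓ (prj ℓ (wb)) = 0 := by
  simp only [Aexp, expHom_prj, FreeGroup.lift_apply_of]; rfl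
lemma Bexp_a : Bexp ℓ (prj ℓ (wa)) = 0 := by
  simp only [Bexp, expHom_prj, FreeGroup.lift_apply_of]; rfl
lemma Bexp_b : Bexp ℓ (prj ℓ (wb)) = 1 := by
  simp only [Bexp, expHom_prj, FreeGroup.lift_apply_of]; rfl

/-- The reference cocycle on the presented group. -/
noncomputable def cZero : HG ℓ → HG ℓ → ℝ := fun g h => Aexp ℓ g * Bexp ℓ h

lemma cZero_cocycle : IsTwoCocycle (cZero ℓ) := by
  intro g₁ g₂ g₃
  simp only [cZero, Aexp_mul, Bexp_mul]
  ring

lemma cZero_one_one : cZero ℓ 1 1 = 0 := by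
  simp [cZero, Aexp_one]

end Specific

section Main
variable {ℓ : ℕ}

lemma coboundary_iff (c : HG ℓ → HG ℓ → ℝ) (hc : IsTwoCocycle c)
    (u : FreeGroup Bool → ℝ)
    (hu : ∀ g h, c (prj ℓ g) (prj ℓ h) = u h - u (g * h) + u g) :
    IsTwoCoboundary c ↔ u (wrel ℓ) = c 1 1 := by
  constructor
  · rintro ⟨ub, hub⟩
    set u' : FreeGroup Bool → ℝ := fun g => ub (prj ℓ g) with hu'def
    have hu' : ∀ g h, c (prj ℓ g) (prj ℓ h) = u' h - u' (g * h) + u' g := by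
      intro g h
      simp only [hu'def, map_mul]
      exact hub _ _
    have heq : u (wrel ℓ) = u' (wrel ℓ) :=
      valid_unique_on_comm_pow c (prj ℓ) u u' hu hu' (wa) (wb) ℓ
    have h1 : u' (wrel ℓ) = ub 1 := by
      simp only [hu'def]; rw [prj_rel]
    have h2 := hub 1 1
    rw [mul_one] at h2
    rw [heq, h1]; linarith
  · intro hrel
    refine descend hc (prj ℓ) u hu (PresentedGroup.mk_surjective _) ?_
    intro k hk
    refine ((u_normalClosure hc (prj ℓ) u hu (T := relS ℓ) ?_ ?_ k (prj_ker ℓ hk))).2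
    · intro t ht; rw [Set.mem_singleton_iff] at ht; subst ht; exact prj_rel ℓ
    · intro t ht; rw [Set.mem_singleton_iff] at ht; subst ht; exact hrel

lemma Aexp_inv (x : HG ℓ) : Aexp ℓ x⁻¹ = -Aexp ℓ x := by
  simp only [Aexp, map_inv]; rfl
lemma Bexp_inv (x : HG ℓ) : Bexp ℓ x⁻¹ = -Bexp ℓ x := by
  simp only [Bexp, map_inv]; rfl
lemma Aexp_comm (x y : HG ℓ) : Aexp ℓ ⁅x, y⁆ = 0 := by
  rw [commutatorElement_def, Aexp_mul, Aexp_mul, Aexp_mul, Aexp_inv, Aexp_inv]; ring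
lemma Bexp_comm (x y : HG ℓ) : Bexp ℓ ⁅x, y⁆ = 0 := by
  rw [commutatorElement_def, Bexp_mul, Bexp_mul, Bexp_mul, Bexp_inv, Bexp_inv]; ring

lemma uZero_rel (u : FreeGroup Bool → ℝ)
    (hu : ∀ g h, cZero ℓ (prj ℓ g) (prj ℓ h) = u h - u (g * h) + u g) :
    u (wrel ℓ) = -(ℓ : ℝ) := by
  have hx : ∀ z, cZero ℓ z (prj ℓ ⁅wa, wb⁆) = cZero ℓ 1 1 := by
    intro z
    rw [cZero_one_one]
    show Aexp ℓ z * Bexp ℓ (prj ℓ ⁅wa, wb⁆) = 0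
    rw [map_commutatorElement, Bexp_comm]; ring
  have hp := u_pow (cZero_cocycle ℓ) (prj ℓ) u hu hx ℓ
  have hxy : ∀ z, cZero ℓ (prj ℓ (wa * wb)) z = cZero ℓ (prj ℓ (wb * wa)) z := by
    intro z
    show Aexp ℓ (prj ℓ (wa * wb)) * Bexp ℓ z = Aexp ℓ (prj ℓ (wb * wa)) * Bexp ℓ z
    rw [map_mul, map_mul, Aexp_mul, Aexp_mul, Aexp_a, Aexp_b]; ring
  have hcm := u_commutator (cZero_cocycle ℓ) (prj ℓ) u hu hxy
  have h1 : cZero ℓ (prj ℓ wb) (prj ℓ wa) = 0 := by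
    show Aexp ℓ (prj ℓ wb) * Bexp ℓ (prj ℓ wa) = 0
    rw [Aexp_b]; ring
  have h2 : cZero ℓ (prj ℓ wa) (prj ℓ wb) = 1 := by
    show Aexp ℓ (prj ℓ wa) * Bexp ℓ (prj ℓ wb) = 1
    rw [Aexp_a, Bexp_b]; ring
  have h3 := cZero_one_one ℓ
  rw [h1, h2, h3] at hcm
  show u (⁅wa, wb⁆ ^ ℓ) = -(ℓ : ℝ)
  rw [hp, hcm, h3]; ring

theorem part3 (hℓ : 2 ≤ ℓ) (c : HG ℓ → HG ℓ → ℝ) (hc : IsTwoCocycle c) :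
    ∃! r : ℝ, IsTwoCoboundary (fun g₁ g₂ => c g₁ g₂ - r * cZero ℓ g₁ g₂) := by
  obtain ⟨u, hu⟩ := exists_u c hc (prj ℓ)
  obtain ⟨u₀, hu₀⟩ := exists_u (cZero ℓ) (cZero_cocycle ℓ) (prj ℓ)
  have h0 : u₀ (wrel ℓ) = -(ℓ : ℝ) := uZero_rel u₀ hu₀
  have hl0 : (ℓ : ℝ) ≠ 0 := by
    have : (2:ℝ) ≤ (ℓ:ℝ) := by exact_mod_cast hℓ
    linarith
  have key : ∀ r : ℝ, IsTwoCoboundary (fun g₁ g₂ => c g₁ g₂ - r * cZero ℓ g₁ g₂)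
      ↔ u (wrel ℓ) + r * ℓ = c 1 1 := by
    intro r
    have hcr : IsTwoCocycle (fun g₁ g₂ => c g₁ g₂ - r * cZero ℓ g₁ g₂) := by
      intro g₁ g₂ g₃
      have h1 := hc g₁ g₂ g₃
      have h2 := cZero_cocycle ℓ g₁ g₂ g₃
      simp only
      linear_combination h1 - r * h2
    have hur : ∀ g h, (fun g₁ g₂ => c g₁ g₂ - r * cZero ℓ g₁ g₂) (prj ℓ g) (prj ℓ h)
        = (fun g => u g - r * u₀ g) h - (fun g => u g - r * u₀ g) (g * h)
          + (fun g => u g - r * u₀ g) g := by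
      intro g h
      have h1 := hu g h
      have h2 := hu₀ g h
      simp only
      linear_combination h1 - r * h2
    rw [coboundary_iff _ hcr _ hur]
    show u (wrel ℓ) - r * u₀ (wrel ℓ) = c 1 1 - r * cZero ℓ 1 1 ↔ _
    rw [h0, cZero_one_one]
    constructor <;> intro h <;> linarith
  refine ⟨(c 1 1 - u (wrel ℓ)) / ℓ, ?_, ?_⟩
  · refine (key _).2 ?_
    field_simp
    ring
  · intro y hy
    have h2 := (key y).1 hy
    field_simp
    linarith

end Main

section Parts12
variable {ℓ : ℕ}

theorem part1 (hℓ : 2 ≤ ℓ) (c : HG ℓ → HG ℓ → ℝ) (hc : IsTwoCocycle c) :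
    ∃ c' : Abelianization (HG ℓ) → Abelianization (HG ℓ) → ℝ, IsTwoCocycle c' ∧
      IsTwoCoboundary (fun g₁ g₂ =>
        c g₁ g₂ - c' (Abelianization.of g₁) (Abelianization.of g₂)) := by
  obtain ⟨r, hr, -⟩ := part3 hℓ c hc
  set Al : Abelianization (HG ℓ) →* Multiplicative ℝ :=
    Abelianization.lift (expHom ℓ (fun b => cond b 1 0)) with hAl
  set Bl : Abelianization (HG ℓ) →* Multiplicative ℝ :=
    Abelianization.lift (expHom ℓ (fun b => cond b 0 1)) with hBl
  refine ⟨fun x y => r * ((Al x).toAdd * (Bl y).toAdd), ?_, ?_⟩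
  · intro g₁ g₂ g₃
    simp only [map_mul, toAdd_mul]
    ring
  · have heq : (fun g₁ g₂ => c g₁ g₂ -
        (fun x y => r * ((Al x).toAdd * (Bl y).toAdd))
          (Abelianization.of g₁) (Abelianization.of g₂))
        = fun g₁ g₂ => c g₁ g₂ - r * cZero ℓ g₁ g₂ := by
      funext g₁ g₂
      simp only
      have hA : (Al (Abelianization.of g₁)).toAdd = Aexp ℓ g₁ := by
        rw [hAl, Abelianization.lift_apply_of]; rfl
      have hB : (Bl (Abelianization.of g₂)).toAdd = Bexp ℓ g₂ := by
        rw [hBl, Abelianization.lift_apply_of]; rfl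
      rw [hA, hB]; rfl
    rw [heq]
    exact hr

theorem part2 (hℓ : 2 ≤ ℓ)
    (c' : Abelianization (HG ℓ) → Abelianization (HG ℓ) → ℝ) (hc' : IsTwoCocycle c')
    (hcb : IsTwoCoboundary (fun g₁ g₂ : HG ℓ =>
      c' (Abelianization.of g₁) (Abelianization.of g₂))) :
    IsTwoCoboundary c' := by
  have hl0 : (ℓ : ℝ) ≠ 0 := by
    have : (2:ℝ) ≤ (ℓ:ℝ) := by exact_mod_cast hℓ
    linarith
  set q : FreeGroup Bool →* Abelianization (HG ℓ) :=
    (Abelianization.of).comp (prj ℓ) with hqdef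
  have qcomm : ∀ x y : FreeGroup Bool, q ⁅x, y⁆ = 1 := by
    intro x y
    rw [map_commutatorElement]
    exact commutatorElement_eq_one_iff_mul_comm.2 (mul_comm _ _)
  obtain ⟨u, hu⟩ := exists_u c' hc' q
  have hu1 : u 1 = c' 1 1 := u_one hc' q u hu
  -- Step A : u (wrel ℓ) = c' 1 1
  obtain ⟨ub, hub⟩ := hcb
  have hub' : ∀ g h : FreeGroup Bool, c' (q g) (q h)
      = (fun w => ub (prj ℓ w)) h - (fun w => ub (prj ℓ w)) (g * h)
        + (fun w => ub (prj ℓ w)) g := by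
    intro g h
    simp only [hqdef, MonoidHom.comp_apply, map_mul]
    exact hub _ _
  have hArel : u (wrel ℓ) = c' 1 1 := by
    have heq : u (wrel ℓ) = ub (prj ℓ (wrel ℓ)) :=
      valid_unique_on_comm_pow c' q u _ hu hub' (wa) (wb) ℓ
    rw [prj_rel ℓ] at heq
    have h2 := hub 1 1
    simp only [map_one, mul_one] at h2
    rw [heq]; linarith
  -- the commutator pairing
  set W : FreeGroup Bool → FreeGroup Bool → ℝ := fun g h => u ⁅g, h⁆ - c' 1 1 with hWdef
  have Wexpr : ∀ g h, W g h = c' (q h) (q g) - c' (q g) (q h) := by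
    intro g h
    have hxy : ∀ z, c' (q (g * h)) z = c' (q (h * g)) z := by
      intro z; rw [map_mul, map_mul, mul_comm]
    have hcm := u_commutator hc' q u hu hxy
    simp only [hWdef]; rw [hcm]; ring
  have Wab : W wa wb = 0 := by
    have hx : ∀ z, c' z (q ⁅wa, wb⁆) = c' 1 1 := by
      intro z; rw [qcomm]; exact cocycle_norm_r hc' z
    have hp := u_pow hc' q u hu hx ℓ
    have h5 : u (⁅wa, wb⁆ ^ ℓ) = c' 1 1 := hArel
    rw [hp] at h5
    have h6 : (ℓ:ℝ) * (u ⁅wa, wb⁆ - c' 1 1) = 0 := by linarith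
    rcases mul_eq_zero.1 h6 with h | h
    · exact absurd h hl0
    · simp only [hWdef]; linarith
  have Waddl : ∀ g₁ g₂ h, W (g₁ * g₂) h = W g₁ h + W g₂ h := by
    intro g₁ g₂ h
    have key : ⁅g₁ * g₂, h⁆ = g₁ * ⁅g₂, h⁆ * g₁⁻¹ * ⁅g₁, h⁆ := by group
    have h1 := u_mul q u hu (g₁ * ⁅g₂, h⁆ * g₁⁻¹) ⁅g₁, h⁆
    have hqX : q (g₁ * ⁅g₂, h⁆ * g₁⁻¹) = 1 := by
      rw [map_mul, map_mul, map_inv, qcomm, mul_one, mul_inv_cancel]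
    have h2 : u (g₁ * ⁅g₂, h⁆ * g₁⁻¹) = u ⁅g₂, h⁆ := u_conj hc' q u hu (qcomm g₂ h) g₁
    simp only [hWdef]
    rw [key, h1, hqX, cocycle_norm_l hc', h2]; ring
  have Waddr : ∀ g h₁ h₂, W g (h₁ * h₂) = W g h₁ + W g h₂ := by
    intro g h₁ h₂
    have key : ⁅g, h₁ * h₂⁆ = ⁅g, h₁⁆ * (h₁ * ⁅g, h₂⁆ * h₁⁻¹) := by group
    have h1 := u_mul q u hu ⁅g, h₁⁆ (h₁ * ⁅g, h₂⁆ * h₁⁻¹)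
    have h2 : u (h₁ * ⁅g, h₂⁆ * h₁⁻¹) = u ⁅g, h₂⁆ := u_conj hc' q u hu (qcomm g h₂) h₁
    simp only [hWdef]
    rw [key, h1, qcomm, cocycle_norm_l hc', h2]; ring
  have W1l : ∀ h, W 1 h = 0 := by
    intro h
    have h1 : ⁅(1 : FreeGroup Bool), h⁆ = 1 := by group
    simp only [hWdef]; rw [h1, hu1]; ring
  have W1r : ∀ g, W g 1 = 0 := by
    intro g
    have h1 : ⁅g, (1 : FreeGroup Bool)⁆ = 1 := by group
    simp only [hWdef]; rw [h1, hu1]; ring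
  have Winvl : ∀ g h, W g⁻¹ h = -W g h := by
    intro g h
    have := Waddl g⁻¹ g h
    rw [inv_mul_cancel, W1l] at this
    linarith
  have Winvr : ∀ g h, W g h⁻¹ = -W g h := by
    intro g h
    have := Waddr g h⁻¹ h
    rw [inv_mul_cancel, W1r] at this
    linarith
  have Wself : ∀ g, W g g = 0 := by
    intro g; rw [Wexpr]; ring
  have Wsym : ∀ g h, W g h = -W h g := by
    intro g h; rw [Wexpr, Wexpr]; ring
  have Wa : ∀ h, W wa h = 0 := by
    intro h
    induction h using FreeGroup.induction_on with
    | C1 => exact W1r wa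
    | of x =>
      cases x with
      | true => exact Wself wa
      | false => exact Wab
    | inv_of x ih => rw [Winvr, ih, neg_zero]
    | mul x y ihx ihy => rw [Waddr, ihx, ihy, add_zero]
  have Wb : ∀ h, W wb h = 0 := by
    intro h
    induction h using FreeGroup.induction_on with
    | C1 => exact W1r wb
    | of x =>
      cases x with
      | true =>
        have h9 := Wsym wb wa
        rw [Wab, neg_zero] at h9
        exact h9
      | false => exact Wself wb
    | inv_of x ih => rw [Winvr, ih, neg_zero]
    | mul x y ihx ihy => rw [Waddr, ihx, ihy, add_zero]
  have Wall : ∀ g h, W g h = 0 := by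
    intro g h
    induction g using FreeGroup.induction_on with
    | C1 => exact W1l h
    | of x =>
      cases x with
      | true => exact Wa h
      | false => exact Wb h
    | inv_of x ih => rw [Winvl, ih, neg_zero]
    | mul x y ihx ihy => rw [Waddl, ihx, ihy, add_zero]
  -- surjectivity of q
  have qsurj : Function.Surjective q := by
    intro y
    obtain ⟨z, rfl⟩ := QuotientGroup.mk_surjective y
    obtain ⟨w, rfl⟩ := PresentedGroup.mk_surjective _ z
    exact ⟨w, rfl⟩
  -- kernel vanishing
  have hker : ∀ k, q k = 1 → u k = c' 1 1 := by
    intro k hk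
    have hmem : prj ℓ k ∈ commutator (HG ℓ) := (QuotientGroup.eq_one_iff _).1 hk
    have hmap : Subgroup.map (prj ℓ) (commutator (FreeGroup Bool)) = commutator (HG ℓ) := by
      rw [commutator_def, commutator_def, Subgroup.map_commutator,
        Subgroup.map_top_of_surjective _ (PresentedGroup.mk_surjective _)]
    rw [← hmap] at hmem
    obtain ⟨m, hm, hmk⟩ := hmem
    have hum : u m = c' 1 1 := by
      rw [commutator_eq_closure] at hm
      refine (u_closure hc' q u hu (T := commutatorSet (FreeGroup Bool)) ?_ ?_ m hm).2
      · rintro t ⟨g₁, g₂, rfl⟩; exact qcomm g₁ g₂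
      · rintro t ⟨g₁, g₂, rfl⟩
        have := Wall g₁ g₂
        simp only [hWdef] at this
        linarith
    have hn : prj ℓ (m⁻¹ * k) = 1 := by
      rw [map_mul, map_inv, hmk, inv_mul_cancel]
    have hT1 : ∀ t ∈ relS ℓ, q t = 1 := by
      intro t ht; rw [Set.mem_singleton_iff] at ht; subst ht
      show q (⁅wa, wb⁆ ^ ℓ) = 1
      rw [map_pow, qcomm, one_pow]
    have hT2 : ∀ t ∈ relS ℓ, u t = c' 1 1 := by
      intro t ht; rw [Set.mem_singleton_iff] at ht; subst ht
      exact hArel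
    have hun := u_normalClosure hc' q u hu hT1 hT2 _ (prj_ker ℓ hn)
    have hk2 : k = m * (m⁻¹ * k) := by group
    have h9 := cocycle_norm_r hc' (q m)
    rw [hk2, u_mul q u hu, hun.1, hun.2, hum]
    linarith
  exact descend hc' q u hu qsurj hker

end Parts12

/-- For `ℓ ≥ 2`, the map `p* : H²(R_ℓ/R_ℓ'; ℝ) → H²(R_ℓ; ℝ)` induced by the abelianization
projection is an isomorphism (stated at the level of inhomogeneous 2-cocycles:
surjectivity and injectivity modulo coboundaries); in particular `H²(R_ℓ; ℝ) ≅ ℝ`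
(every cocycle is cohomologous to a unique multiple of a fixed cocycle). -/
theorem oneRelator_H2_pullback_iso (ℓ : ℕ) (hℓ : 2 ≤ ℓ) :
    (∀ c : OneRelatorGroup ℓ → OneRelatorGroup ℓ → ℝ, IsTwoCocycle c →
      ∃ c' : Abelianization (OneRelatorGroup ℓ) → Abelianization (OneRelatorGroup ℓ) → ℝ,
        IsTwoCocycle c' ∧
        IsTwoCoboundary (fun g₁ g₂ =>
          c g₁ g₂ - c' (Abelianization.of g₁) (Abelianization.of g₂))) ∧
    (∀ c' : Abelianization (OneRelatorGroup ℓ) → Abelianization (OneRelatorGroup ℓ) → ℝ,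
      IsTwoCocycle c' →
      IsTwoCoboundary (fun g₁ g₂ : OneRelatorGroup ℓ =>
        c' (Abelianization.of g₁) (Abelianization.of g₂)) →
      IsTwoCoboundary c') ∧
    (∃ c₀ : OneRelatorGroup ℓ → OneRelatorGroup ℓ → ℝ, IsTwoCocycle c₀ ∧
      ∀ c : OneRelatorGroup ℓ → OneRelatorGroup ℓ → ℝ, IsTwoCocycle c →
        ∃! r : ℝ, IsTwoCoboundary (fun g₁ g₂ => c g₁ g₂ - r * c₀ g₁ g₂)) := by
  exact ⟨fun c hc => part1 hℓ c hc, fun c' hc' hcb => part2 hℓ c' hc' hcb,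
    ⟨cZero ℓ, cZero_cocycle ℓ, fun c hc => part3 hℓ c hc⟩⟩
end

section
/- Let G_ℓ = ⟨a_1,…,a_ℓ, b_1,…,b_ℓ | [a_1,b_1]⋯[a_ℓ,b_ℓ]⟩ be the genus-ℓ surface group (ℓ ≥ 2), and set y_i = (b_i a_i²) b_i^{-1} (b_i a_i²)^{-1}. Then the element [y_1, (b_1 a_1²) a_1^{-1} (b_1 a_1²)^{-1}] ⋯ [y_ℓ, (b_ℓ a_ℓ²) a_ℓ^{-1} (b_ℓ a_ℓ²)^{-1}] lies in the mixed commutator subgroup [G_ℓ, G_ℓ']. -/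
open scoped commutatorElement

/-- The surface relator `[a₁,b₁]⋯[a_ℓ,b_ℓ]` in the free group on `Fin ℓ × Bool`
(`(i, true)` is `aᵢ` and `(i, false)` is `bᵢ`). -/
def surfaceRelator (ℓ : ℕ) : FreeGroup (Fin ℓ × Bool) :=
  (List.ofFn fun i : Fin ℓ => ⁅FreeGroup.of (i, true), FreeGroup.of (i, false)⁆).prod

/-- The genus-`ℓ` surface group `G_ℓ = ⟨a₁,…,a_ℓ,b₁,…,b_ℓ ∣ [a₁,b₁]⋯[a_ℓ,b_ℓ]⟩`. -/
def SurfaceGroup (ℓ : ℕ) : Type :=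
  PresentedGroup ({surfaceRelator ℓ} : Set (FreeGroup (Fin ℓ × Bool)))

noncomputable instance (ℓ : ℕ) : Group (SurfaceGroup ℓ) := by
  unfold SurfaceGroup; infer_instance

/-- The generator `aᵢ` of the surface group. -/
def sA {ℓ : ℕ} (i : Fin ℓ) : SurfaceGroup ℓ := PresentedGroup.of (i, true)

/-- The generator `bᵢ` of the surface group. -/
def sB {ℓ : ℕ} (i : Fin ℓ) : SurfaceGroup ℓ := PresentedGroup.of (i, false)

section Aux

variable {Q : Type*} [Group Q]

/-- In a group where all commutators are central, `⁅x⁻¹, y⁆ = ⁅x, y⁆⁻¹`. -/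
lemma aux_comm_inv_left (hcen : ∀ x y z : Q, Commute ⁅x, y⁆ z) (x y : Q) :
    ⁅x⁻¹, y⁆ = ⁅x, y⁆⁻¹ := by
  have h : ⁅x⁻¹, y⁆ = x⁻¹ * ⁅y, x⁆ * x := by group
  rw [h, (hcen y x (x⁻¹)).symm.eq, commutatorElement_inv]
  group

lemma aux_comm_inv_right (hcen : ∀ x y z : Q, Commute ⁅x, y⁆ z) (x y : Q) :
    ⁅x, y⁻¹⁆ = ⁅x, y⁆⁻¹ := by
  rw [← commutatorElement_inv, aux_comm_inv_left hcen, commutatorElement_inv,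
    commutatorElement_inv]

lemma aux_central_conj (hcen : ∀ x y z : Q, Commute ⁅x, y⁆ z) (x y c : Q) :
    c * ⁅x, y⁆ * c⁻¹ = ⁅x, y⁆ := by
  rw [(hcen x y c).symm.eq]; group

/-- key algebraic lemma in a group whose commutators are central -/
lemma aux_key (hcen : ∀ x y z : Q, Commute ⁅x, y⁆ z) {n : ℕ} (a b : Fin n → Q)
    (hrel : (List.ofFn fun i => ⁅a i, b i⁆).prod = 1) :
    (List.ofFn fun i =>
      ⁅(b i * a i ^ 2) * (b i)⁻¹ * (b i * a i ^ 2)⁻¹,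
        (b i * a i ^ 2) * (a i)⁻¹ * (b i * a i ^ 2)⁻¹⁆).prod = 1 := by
  have hterm : ∀ i, ⁅(b i * a i ^ 2) * (b i)⁻¹ * (b i * a i ^ 2)⁻¹,
      (b i * a i ^ 2) * (a i)⁻¹ * (b i * a i ^ 2)⁻¹⁆ = ⁅a i, b i⁆⁻¹ := by
    intro i
    set c := b i * a i ^ 2 with hc
    have h1 : ⁅c * (b i)⁻¹ * c⁻¹, c * (a i)⁻¹ * c⁻¹⁆ = c * ⁅(b i)⁻¹, (a i)⁻¹⁆ * c⁻¹ :=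
      (conjugate_commutatorElement _ _ _).symm
    rw [h1, aux_central_conj hcen, aux_comm_inv_left hcen, aux_comm_inv_right hcen,
      inv_inv, commutatorElement_inv]
  have h2 : (List.ofFn fun i =>
      ⁅(b i * a i ^ 2) * (b i)⁻¹ * (b i * a i ^ 2)⁻¹,
        (b i * a i ^ 2) * (a i)⁻¹ * (b i * a i ^ 2)⁻¹⁆) =
      List.ofFn fun i => ⁅a i, b i⁆⁻¹ := by
    congr 1; funext i; exact hterm i
  rw [h2]
  -- prod of inverses of central elements is inverse of prod
  have h3 : ∀ (l : List (Q × Q)),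
      (l.map fun p => ⁅p.1, p.2⁆⁻¹).prod = ((l.map fun p => ⁅p.1, p.2⁆).prod)⁻¹ := by
    intro l
    induction l with
    | nil => simp
    | cons p t ih =>
        simp only [List.map_cons, List.prod_cons, ih, mul_inv_rev]
        have hcom : Commute ⁅p.1, p.2⁆⁻¹ ((t.map fun p => ⁅p.1, p.2⁆).prod)⁻¹ :=
          ((hcen p.1 p.2 _).inv_left).inv_right
        rw [hcom.eq]
  have h4 : (List.ofFn fun i => ⁅a i, b i⁆⁻¹) =
      ((List.ofFn fun i => ((a i, b i) : Q × Q)).map fun p => ⁅p.1, p.2⁆⁻¹) := by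
    rw [List.map_ofFn]; rfl
  have h5 : (List.ofFn fun i => ⁅a i, b i⁆) =
      ((List.ofFn fun i => ((a i, b i) : Q × Q)).map fun p => ⁅p.1, p.2⁆) := by
    rw [List.map_ofFn]; rfl
  rw [h4, h3, ← h5, hrel, inv_one]

end Aux

/-- In the genus-`ℓ` surface group (`ℓ ≥ 2`), with `yᵢ = (bᵢaᵢ²) bᵢ⁻¹ (bᵢaᵢ²)⁻¹`, the
element `[y₁, (b₁a₁²)a₁⁻¹(b₁a₁²)⁻¹] ⋯ [y_ℓ, (b_ℓa_ℓ²)a_ℓ⁻¹(b_ℓa_ℓ²)⁻¹]` lies in the mixed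
commutator subgroup `[G_ℓ, G_ℓ']`. -/
theorem surfaceGroup_element_mem_mixedCommutator (ℓ : ℕ) (hℓ : 2 ≤ ℓ) :
    (List.ofFn fun i : Fin ℓ =>
        ⁅(sB i * sA i ^ 2) * (sB i)⁻¹ * (sB i * sA i ^ 2)⁻¹,
          (sB i * sA i ^ 2) * (sA i)⁻¹ * (sB i * sA i ^ 2)⁻¹⁆).prod ∈
      ⁅(⊤ : Subgroup (SurfaceGroup ℓ)), commutator (SurfaceGroup ℓ)⁆ := by
  set G := SurfaceGroup ℓ
  set N : Subgroup G := ⁅(⊤ : Subgroup G), commutator G⁆ with hN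
  haveI : N.Normal := by rw [hN]; unfold commutator; infer_instance
  rw [← QuotientGroup.eq_one_iff]
  set π : G →* G ⧸ N := QuotientGroup.mk' N with hπ
  have hsurj : Function.Surjective π := QuotientGroup.mk'_surjective N
  -- all commutators in the quotient are central
  have hcen : ∀ x y z : G ⧸ N, Commute ⁅x, y⁆ z := by
    intro x y z
    obtain ⟨x, rfl⟩ := hsurj x
    obtain ⟨y, rfl⟩ := hsurj y
    obtain ⟨z, rfl⟩ := hsurj z
    rw [← commutatorElement_eq_one_iff_commute, ← map_commutatorElement,
      ← map_commutatorElement, hπ, QuotientGroup.mk'_apply, QuotientGroup.eq_one_iff]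
    have hmem : ⁅x, y⁆ ∈ commutator G :=
      Subgroup.commutator_mem_commutator (Subgroup.mem_top x) (Subgroup.mem_top y)
    have : ⁅z, ⁅x, y⁆⁆ ∈ N :=
      Subgroup.commutator_mem_commutator (Subgroup.mem_top z) hmem
    rw [← commutatorElement_inv]
    exact N.inv_mem this
  -- the relator holds in the surface group
  have hrel : (List.ofFn fun i : Fin ℓ => ⁅sA i, sB i⁆).prod = 1 := by
    have h0 : PresentedGroup.mk ({surfaceRelator ℓ} : Set (FreeGroup (Fin ℓ × Bool)))
        (surfaceRelator ℓ) = 1 := by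
      rw [PresentedGroup.mk_eq_one_iff]
      exact Subgroup.subset_normalClosure rfl
    rw [surfaceRelator, map_list_prod] at h0
    refine Eq.trans ?_ h0; rw [List.map_ofFn]
    congr 1
  -- push to the quotient
  show π _ = 1
  rw [map_list_prod]
  have hπrel : (List.ofFn fun i : Fin ℓ => ⁅π (sA i), π (sB i)⁆).prod = 1 := by
    have := congrArg π hrel
    rw [map_list_prod, map_one] at this
    rw [← this, List.map_ofFn]
    congr 1
  have := aux_key hcen (fun i => π (sA i)) (fun i => π (sB i)) hπrel
  rw [← this, List.map_ofFn]
  congr 1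
end
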